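/- arXiv:2106.13922 — 7 statements merged into one kernel-verified Lean document; each statement's English description precedes it below -/
import Mathlib

section
/- The operators ∂_i^{(β)} satisfy the braid relations: ∂_i^{(β)} ∂_{i+1}^{(β)} ∂_i^{(β)} = ∂_{i+1}^{(β)} ∂_i^{(β)} ∂_{i+1}^{(β)}, and ∂_i^{(β)} ∂_j^{(β)} = ∂_j^{(β)} ∂_i^{(β)} when |i - j| ≥ 2. -/
open MvPolynomial

noncomputable section

abbrev R : Type := MvPolynomial ℕ (Polynomial ℤ)

/-- The parameter `β`, as an element of `R = ℤ[β][x₀,x₁,…]`. -/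
def bb : R := MvPolynomial.C Polynomial.X

/-- `sw i` exchanges the variables `x_i` and `x_{i+1}`. -/
def sw (i : ℕ) (f : R) : R := MvPolynomial.rename (Equiv.swap i (i + 1)) f

/-- The β-deformed divided difference operator, `∂_i^{(β)}(f) = ∂_i((1 + β x_{i+1})·f)`. -/
def Db (D : ℕ → R → R) (i : ℕ) (f : R) : R := D i ((1 + bb * X (i + 1)) * f)

/-!
Since `R` is a domain, `∂_i` is determined by `(x_i - x_{i+1}) ∂_i f = f - s_i f`. Hence it
satisfies the twisted Leibniz rule `∂_i (c f) = s_i(c) ∂_i f + ∂_i(c) f`, kills `s_i`-invariants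
and has `s_i`-invariant values, so `∂_i ∂_i = 0`. Moving the factors `1 + β x_k` through the
`∂`'s with the Leibniz rule turns both sides of the β-braid relation into `∂_i ∂_{i+1} ∂_i` and
`∂_{i+1} ∂_i ∂_{i+1}` applied to `(1 + β x_{i+1}) (1 + β x_{i+2})² f`. These agree because
either one, multiplied by the Vandermonde product of `x_i, x_{i+1}, x_{i+2}`, is the alternating
sum of the six permuted copies of `f`. The far commutation is the same argument with
`(1 + β x_{i+1}) (1 + β x_{j+1}) f`.
-/

@[simp] lemma sw_add (i : ℕ) (f g : R) : sw i (f + g) = sw i f + sw i g := map_add _ f g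
@[simp] lemma sw_sub (i : ℕ) (f g : R) : sw i (f - g) = sw i f - sw i g := map_sub _ f g
@[simp] lemma sw_mul (i : ℕ) (f g : R) : sw i (f * g) = sw i f * sw i g := map_mul _ f g
@[simp] lemma sw_one (i : ℕ) : sw i 1 = 1 := map_one _
@[simp] lemma sw_bb (i : ℕ) : sw i bb = bb := rename_C _ _

@[simp] lemma sw_X_self (i : ℕ) : sw i (X i) = X (i + 1) := by simp [sw]
@[simp] lemma sw_X_succ (i : ℕ) : sw i (X (i + 1)) = X i := by simp [sw]

lemma sw_X_of_ne {i k : ℕ} (h : k ≠ i) (h' : k ≠ i + 1) : sw i (X k) = X k := by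
  simp [sw, Equiv.swap_apply_of_ne_of_ne h h']

@[simp] lemma sw_sw (i : ℕ) (f : R) : sw i (sw i f) = f := by
  rw [sw, sw, rename_rename, ← Equiv.Perm.coe_mul, Equiv.swap_mul_self, Equiv.Perm.coe_one,
    rename_id_apply]

lemma sw_comm_of_far {i j : ℕ} (hij : i + 2 ≤ j ∨ j + 2 ≤ i) (f : R) :
    sw i (sw j f) = sw j (sw i f) := by
  simp only [sw, rename_rename]
  congr 2
  funext n
  simp only [Function.comp_apply, Equiv.swap_apply_def]
  split_ifs <;> omega

lemma sw_braid (i : ℕ) (f : R) :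
    sw i (sw (i + 1) (sw i f)) = sw (i + 1) (sw i (sw (i + 1) f)) := by
  simp only [sw, rename_rename]
  congr 2
  funext n
  simp only [Function.comp_apply, Equiv.swap_apply_def]
  split_ifs <;> omega

lemma X_sub_X_ne_zero {m n : ℕ} (h : m ≠ n) : (X m - X n : R) ≠ 0 :=
  sub_ne_zero.mpr fun he => h (X_injective he)

def IsDividedDifference (D : ℕ → R → R) : Prop :=
  ∀ (i : ℕ) (f : R), (X i - X (i + 1)) * D i f = f - sw i f

namespace IsDividedDifference

variable {D : ℕ → R → R}

lemma eq_of_mul_eq (hD : IsDividedDifference D) {i : ℕ} {f g : R}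
    (h : (X i - X (i + 1)) * g = f - sw i f) : D i f = g :=
  mul_left_cancel₀ (X_sub_X_ne_zero (Nat.lt_succ_self i).ne) ((hD i f).trans h.symm)

lemma map_add (hD : IsDividedDifference D) (i : ℕ) (f g : R) :
    D i (f + g) = D i f + D i g :=
  hD.eq_of_mul_eq (by rw [sw_add]; linear_combination hD i f + hD i g)

lemma map_sub (hD : IsDividedDifference D) (i : ℕ) (f g : R) :
    D i (f - g) = D i f - D i g :=
  hD.eq_of_mul_eq (by rw [sw_sub]; linear_combination hD i f - hD i g)

lemma map_mul (hD : IsDividedDifference D) (i : ℕ) (c f : R) :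
    D i (c * f) = sw i c * D i f + D i c * f :=
  hD.eq_of_mul_eq (by rw [sw_mul]; linear_combination sw i c * hD i f + f * hD i c)

lemma apply_eq_zero_of_sw_eq (hD : IsDividedDifference D) {i : ℕ} {c : R} (hc : sw i c = c) :
    D i c = 0 :=
  hD.eq_of_mul_eq (by rw [hc]; ring)

lemma map_mul_of_sw_eq (hD : IsDividedDifference D) {i : ℕ} {c : R} (hc : sw i c = c) (f : R) :
    D i (c * f) = c * D i f := by
  rw [hD.map_mul, hD.apply_eq_zero_of_sw_eq hc, hc, zero_mul, add_zero]

lemma sw_apply (hD : IsDividedDifference D) (i : ℕ) (f : R) : sw i (D i f) = D i f := by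
  have h := congrArg (sw i) (hD i f)
  simp only [sw_mul, sw_sub, sw_X_self, sw_X_succ, sw_sw] at h
  exact mul_left_cancel₀ (X_sub_X_ne_zero (Nat.lt_succ_self i).ne)
    (by linear_combination -h - hD i f)

lemma apply_apply (hD : IsDividedDifference D) (i : ℕ) (f : R) : D i (D i f) = 0 :=
  hD.apply_eq_zero_of_sw_eq (hD.sw_apply i f)

lemma sw_apply_of_far (hD : IsDividedDifference D) {i j : ℕ} (hij : i + 2 ≤ j ∨ j + 2 ≤ i)
    (f : R) : sw j (D i f) = D i (sw j f) := by
  have h := congrArg (sw j) (hD i f)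
  simp (disch := omega) only [sw_mul, sw_sub, sw_X_of_ne] at h
  exact (hD.eq_of_mul_eq (by rw [h, sw_comm_of_far hij])).symm

lemma comm_of_far (hD : IsDividedDifference D) {i j : ℕ} (hij : i + 2 ≤ j ∨ j + 2 ≤ i)
    (f : R) : D i (D j f) = D j (D i f) := by
  have hδ : sw j (X i - X (i + 1)) = X i - X (i + 1) := by
    simp (disch := omega) only [sw_sub, sw_X_of_ne]
  refine hD.eq_of_mul_eq ?_
  rw [← hD.map_mul_of_sw_eq hδ, hD i f, hD.map_sub, hD.sw_apply_of_far hij.symm]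

lemma mul_braid_left (hD : IsDividedDifference D) (i : ℕ) (f : R) :
    (X i - X (i + 1)) * (X (i + 1) - X (i + 2)) * (X i - X (i + 2)) * D i (D (i + 1) (D i f)) =
      f - sw i f - sw (i + 1) f + sw (i + 1) (sw i f) + sw i (sw (i + 1) f)
        - sw i (sw (i + 1) (sw i f)) := by
  have h₁ := hD i f
  have h₂ := congrArg (sw (i + 1)) h₁
  have h₃ := congrArg (sw i) h₂
  have h₄ := hD (i + 1) (D i f)
  have h₅ := congrArg (sw i) h₄
  simp (disch := omega) only [sw_mul, sw_sub, sw_X_of_ne, sw_X_self, sw_X_succ, hD.sw_apply]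
    at h₂ h₃ h₅
  linear_combination (X (i + 1) - X (i + 2)) * (X i - X (i + 2)) * hD i (D (i + 1) (D i f))
    + (X i - X (i + 2)) * h₄ - (X (i + 1) - X (i + 2)) * h₅ + h₁ - h₂ + h₃

lemma mul_braid_right (hD : IsDividedDifference D) (i : ℕ) (f : R) :
    (X i - X (i + 1)) * (X (i + 1) - X (i + 2)) * (X i - X (i + 2)) *
        D (i + 1) (D i (D (i + 1) f)) =
      f - sw i f - sw (i + 1) f + sw (i + 1) (sw i f) + sw i (sw (i + 1) f)
        - sw i (sw (i + 1) (sw i f)) := by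
  have h₁ := hD (i + 1) f
  have h₂ := congrArg (sw i) h₁
  have h₃ := congrArg (sw (i + 1)) h₂
  have h₄ := hD i (D (i + 1) f)
  have h₅ := congrArg (sw (i + 1)) h₄
  simp (disch := omega) only [sw_mul, sw_sub, sw_X_of_ne, sw_X_self, sw_X_succ, hD.sw_apply]
    at h₂ h₃ h₅
  rw [sw_braid]
  linear_combination (X i - X (i + 1)) * (X i - X (i + 2)) * hD (i + 1) (D i (D (i + 1) f))
    + (X i - X (i + 2)) * h₄ - (X i - X (i + 1)) * h₅ + h₁ - h₂ + h₃

lemma braid (hD : IsDividedDifference D) (i : ℕ) (f : R) :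
    D i (D (i + 1) (D i f)) = D (i + 1) (D i (D (i + 1) f)) := by
  refine mul_left_cancel₀ ?_ ((hD.mul_braid_left i f).trans (hD.mul_braid_right i f).symm)
  exact mul_ne_zero (mul_ne_zero (X_sub_X_ne_zero (by omega)) (X_sub_X_ne_zero (by omega)))
    (X_sub_X_ne_zero (by omega))

lemma apply_one_add_bb_X (hD : IsDividedDifference D) (k : ℕ) :
    D k (1 + bb * X k) = bb :=
  hD.eq_of_mul_eq <| by simp only [sw_add, sw_one, sw_mul, sw_bb, sw_X_self]; ring

lemma apply_one_add_bb_X_succ (hD : IsDividedDifference D) (k : ℕ) :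
    D k (1 + bb * X (k + 1)) = -bb :=
  hD.eq_of_mul_eq <| by simp only [sw_add, sw_one, sw_mul, sw_bb, sw_X_succ]; ring

lemma one_add_bb_X_mul_apply (hD : IsDividedDifference D) (k : ℕ) (f : R) :
    (1 + bb * X k) * D k f = Db D k f + bb * f := by
  rw [Db, hD.map_mul, hD.apply_one_add_bb_X_succ]
  simp only [sw_add, sw_one, sw_mul, sw_bb, sw_X_succ]
  ring

lemma one_add_bb_X_succ_mul_apply (hD : IsDividedDifference D) (k : ℕ) (f : R) :
    (1 + bb * X (k + 1)) * D k f = D k ((1 + bb * X k) * f) - bb * f := by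
  rw [hD.map_mul, hD.apply_one_add_bb_X]
  simp only [sw_add, sw_one, sw_mul, sw_bb, sw_X_self]
  ring

lemma Db_braid_left_eq (hD : IsDividedDifference D) (i : ℕ) (f : R) :
    Db D i (Db D (i + 1) (Db D i f)) =
      D i (D (i + 1) (D i ((1 + bb * X (i + 1)) * (1 + bb * X (i + 2)) ^ 2 * f))) := by
  have hs : sw i (1 + bb * X (i + 2)) = 1 + bb * X (i + 2) := by
    simp (disch := omega) only [sw_add, sw_one, sw_mul, sw_bb, sw_X_of_ne]
  calc Db D i (Db D (i + 1) (Db D i f))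
      = D i ((1 + bb * X (i + 1)) * D (i + 1) ((1 + bb * X (i + 2)) *
          D i ((1 + bb * X (i + 1)) * f))) := rfl
    _ = D i ((1 + bb * X (i + 1)) * D (i + 1) (D i ((1 + bb * X (i + 2)) *
          ((1 + bb * X (i + 1)) * f)))) := by rw [hD.map_mul_of_sw_eq hs]
    _ = D i (D (i + 1) ((1 + bb * X (i + 2)) * D i ((1 + bb * X (i + 2)) *
          ((1 + bb * X (i + 1)) * f)))) := by
      rw [hD.one_add_bb_X_mul_apply, hD.map_add, hD.map_mul_of_sw_eq (sw_bb i), hD.apply_apply,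
        mul_zero, add_zero, Db]
    _ = _ := by rw [← hD.map_mul_of_sw_eq hs]; ring_nf

lemma Db_braid_right_eq (hD : IsDividedDifference D) (i : ℕ) (f : R) :
    Db D (i + 1) (Db D i (Db D (i + 1) f)) =
      D (i + 1) (D i (D (i + 1) ((1 + bb * X (i + 1)) * (1 + bb * X (i + 2)) ^ 2 * f))) := by
  have hs : sw i (1 + bb * X (i + 2)) = 1 + bb * X (i + 2) := by
    simp (disch := omega) only [sw_add, sw_one, sw_mul, sw_bb, sw_X_of_ne]
  calc Db D (i + 1) (Db D i (Db D (i + 1) f))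
      = D (i + 1) ((1 + bb * X (i + 2)) * D i ((1 + bb * X (i + 1)) *
          D (i + 1) ((1 + bb * X (i + 2)) * f))) := rfl
    _ = D (i + 1) (D i ((1 + bb * X (i + 2)) * D (i + 1) ((1 + bb * X (i + 2)) ^ 2 * f)
          + bb * (1 + bb * X (i + 2)) ^ 2 * f)) := by
      rw [hD.one_add_bb_X_mul_apply, ← hD.map_mul_of_sw_eq hs, Db]
      ring_nf
    _ = _ := by
      rw [hD.one_add_bb_X_succ_mul_apply]
      ring_nf

lemma Db_Db_eq_of_far (hD : IsDividedDifference D) {i j : ℕ} (hij : i + 2 ≤ j ∨ j + 2 ≤ i)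
    (f : R) :
    Db D i (Db D j f) = D i (D j ((1 + bb * X (i + 1)) * (1 + bb * X (j + 1)) * f)) := by
  have hs : sw j (1 + bb * X (i + 1)) = 1 + bb * X (i + 1) := by
    simp (disch := omega) only [sw_add, sw_one, sw_mul, sw_bb, sw_X_of_ne]
  rw [Db, Db, ← hD.map_mul_of_sw_eq hs, mul_assoc]

end IsDividedDifference

/-- The operators `∂_i^{(β)}` satisfy the braid relations:
`∂_i^{(β)} ∂_{i+1}^{(β)} ∂_i^{(β)} = ∂_{i+1}^{(β)} ∂_i^{(β)} ∂_{i+1}^{(β)}`, and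
`∂_i^{(β)} ∂_j^{(β)} = ∂_j^{(β)} ∂_i^{(β)}` when `|i - j| ≥ 2`.  Here each `∂_i`
is characterized by `(x_i - x_{i+1}) · ∂_i f = f - s_i f`. -/
theorem stmt5 (D : ℕ → R → R)
    (hD : ∀ (i : ℕ) (f : R), (X i - X (i + 1)) * D i f = f - sw i f) :
    (∀ (i : ℕ) (f : R),
        Db D i (Db D (i + 1) (Db D i f)) = Db D (i + 1) (Db D i (Db D (i + 1) f))) ∧
    (∀ (i j : ℕ) (f : R), i + 2 ≤ j ∨ j + 2 ≤ i →
        Db D i (Db D j f) = Db D j (Db D i f)) := by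
  have hD : IsDividedDifference D := hD
  refine ⟨fun i f => ?_, fun i j f hij => ?_⟩
  · rw [hD.Db_braid_left_eq, hD.Db_braid_right_eq, hD.braid]
  · rw [hD.Db_Db_eq_of_far hij, hD.Db_Db_eq_of_far hij.symm, hD.comm_of_far hij,
      mul_comm (1 + _)]
end
end

section
/- For any sequence u_1, ..., u_n with each u_j ∈ {x_i, X_i}, the Demazure operator satisfies π_i(u_1⋯u_n) = u_1⋯u_n + x_{i+1}·Σ_{j=1}^n s_i(u_1⋯u_{j-1})·u_{j+1}⋯u_n, and the β-deformed operator satisfies π_i^{(β)}(u_1⋯u_n) = u_1⋯u_n + X_{i+1}·Σ_{j=1}^n s_i(u_1⋯u_{j-1})·u_{j+1}⋯u_n, where X_{i+1} = x_{i+1}(1 + β x_i). -/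
open MvPolynomial

noncomputable section

lemma sw_prod' (i : ℕ) (s : Finset ℕ) (u : ℕ → R) :
    sw i (∏ k ∈ s, u k) = ∏ k ∈ s, sw i (u k) := by
  simp [sw, map_prod]

lemma tele (i : ℕ) (u : ℕ → R) (n : ℕ)
    (hu : ∀ k < n, u k - sw i (u k) = X i - X (i + 1)) :
    (∏ j ∈ Finset.range n, u j) - sw i (∏ j ∈ Finset.range n, u j) =
      (X i - X (i + 1)) *
        ∑ j ∈ Finset.range n,
          sw i (∏ k ∈ Finset.range j, u k) * ∏ k ∈ Finset.Ico (j + 1) n, u k := by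
  induction n with
  | zero => simp [sw]
  | succ n ih =>
    have ih' := ih (fun k hk => hu k (hk.trans n.lt_succ_self))
    have hun := hu n n.lt_succ_self
    rw [Finset.prod_range_succ, Finset.sum_range_succ]
    have hsplit : ∀ j ∈ Finset.range n,
        sw i (∏ k ∈ Finset.range j, u k) * ∏ k ∈ Finset.Ico (j + 1) (n + 1), u k =
        (sw i (∏ k ∈ Finset.range j, u k) * ∏ k ∈ Finset.Ico (j + 1) n, u k) * u n := by
      intro j hj
      rw [Finset.prod_Ico_succ_top (Finset.mem_range.mp hj), mul_assoc]
    rw [Finset.sum_congr rfl hsplit, ← Finset.sum_mul]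
    rw [Finset.Ico_self, Finset.prod_empty, mul_one]
    rw [sw_prod'] at *
    have hm : sw i ((∏ x ∈ Finset.range n, u x) * u n) =
        (∏ k ∈ Finset.range n, sw i (u k)) * sw i (u n) := by
      simp [sw, map_mul, map_prod]
    rw [hm]
    linear_combination (u n) * ih' + (∏ k ∈ Finset.range n, sw i (u k)) * hun

/-- For any sequence `u_1, …, u_n` with each `u_j ∈ {x_i, X_i}` where
`X_i = x_i(1 + β x_{i+1})`, the Demazure operator `π_i(f) = ∂_i(x_i f)` satisfies
`π_i(u_1⋯u_n) = u_1⋯u_n + x_{i+1}·Σ_j s_i(u_1⋯u_{j-1})·u_{j+1}⋯u_n`, and the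
β-deformed operator `π_i^{(β)}(f) = ∂_i((1 + β x_{i+1}) x_i f)` satisfies
`π_i^{(β)}(u_1⋯u_n) = u_1⋯u_n + X_{i+1}·Σ_j s_i(u_1⋯u_{j-1})·u_{j+1}⋯u_n`,
with `X_{i+1} = x_{i+1}(1 + β x_i)`; `∂_i` is characterized by
`(x_i - x_{i+1})·∂_i f = f - s_i f`. -/
theorem stmt7 (i : ℕ) (D : R → R)
    (hD : ∀ f : R, (X i - X (i + 1)) * D f = f - sw i f)
    (n : ℕ) (u : Fin n → R)
    (hu : ∀ j, u j = X i ∨ u j = X i * (1 + bb * X (i + 1))) :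
    D (X i * ∏ j, u j) =
        (∏ j, u j) +
          X (i + 1) *
            ∑ j : Fin n,
              sw i (∏ k ∈ Finset.univ.filter (fun k => k < j), u k) *
                ∏ k ∈ Finset.univ.filter (fun k => j < k), u k ∧
    D ((1 + bb * X (i + 1)) * (X i * ∏ j, u j)) =
        (∏ j, u j) +
          (X (i + 1) * (1 + bb * X i)) *
            ∑ j : Fin n,
              sw i (∏ k ∈ Finset.univ.filter (fun k => k < j), u k) *
                ∏ k ∈ Finset.univ.filter (fun k => j < k), u k := by
  classical
  set u' : ℕ → R := fun k => if h : k < n then u ⟨k, h⟩ else 1 with hu'def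
  have hval : ∀ j : Fin n, u j = u' (j : ℕ) := by
    intro j
    simp only [hu'def, dif_pos j.isLt]
  have hu' : ∀ k < n, u' k - sw i (u' k) = X i - X (i + 1) := by
    intro k hk
    simp only [hu'def, dif_pos hk]
    rcases hu ⟨k, hk⟩ with h | h <;> rw [h]
    · have : sw i (X i : R) = X (i + 1) := by
        unfold sw; rw [rename_X, Equiv.swap_apply_left]
      rw [this]
    · have : sw i (X i * (1 + bb * X (i + 1)) : R) = X (i + 1) * (1 + bb * X i) := by
        unfold sw bb
        simp [map_mul, map_add, map_one, rename_X, rename_C]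
      rw [this]; ring
  have hP : (∏ j, u j) = ∏ j ∈ Finset.range n, u' j := by
    rw [← Fin.prod_univ_eq_prod_range u' n]
    exact Finset.prod_congr rfl fun j _ => hval j
  have hlt : ∀ j : Fin n,
      ∏ k ∈ Finset.univ.filter (fun k => k < j), u k = ∏ k ∈ Finset.range (j : ℕ), u' k := by
    intro j
    rw [Finset.prod_filter]
    calc ∏ k : Fin n, (if k < j then u k else 1)
        = ∏ k : Fin n, (if ((k : ℕ)) < (j : ℕ) then u' (k : ℕ) else 1) := by
          apply Finset.prod_congr rfl
          intro k _
          by_cases h : k < j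
          · rw [if_pos h, if_pos (by exact_mod_cast h), hval]
          · rw [if_neg h, if_neg (by exact_mod_cast h)]
      _ = ∏ k ∈ Finset.range n, (if k < (j : ℕ) then u' k else 1) :=
          Fin.prod_univ_eq_prod_range (fun k => if k < (j : ℕ) then u' k else 1) n
      _ = ∏ k ∈ (Finset.range n).filter (fun k => k < (j : ℕ)), u' k :=
          (Finset.prod_filter _ _).symm
      _ = ∏ k ∈ Finset.range (j : ℕ), u' k := by
          congr 1
          ext k
          simp only [Finset.mem_filter, Finset.mem_range]
          have := j.isLt
          omega
  have hgt : ∀ j : Fin n,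
      ∏ k ∈ Finset.univ.filter (fun k => j < k), u k =
        ∏ k ∈ Finset.Ico ((j : ℕ) + 1) n, u' k := by
    intro j
    rw [Finset.prod_filter]
    calc ∏ k : Fin n, (if j < k then u k else 1)
        = ∏ k : Fin n, (if (j : ℕ) < ((k : ℕ)) then u' (k : ℕ) else 1) := by
          apply Finset.prod_congr rfl
          intro k _
          by_cases h : j < k
          · rw [if_pos h, if_pos (by exact_mod_cast h), hval]
          · rw [if_neg h, if_neg (by exact_mod_cast h)]
      _ = ∏ k ∈ Finset.range n, (if (j : ℕ) < k then u' k else 1) :=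
          Fin.prod_univ_eq_prod_range (fun k => if (j : ℕ) < k then u' k else 1) n
      _ = ∏ k ∈ (Finset.range n).filter (fun k => (j : ℕ) < k), u' k :=
          (Finset.prod_filter _ _).symm
      _ = ∏ k ∈ Finset.Ico ((j : ℕ) + 1) n, u' k := by
          congr 1
          ext k
          simp only [Finset.mem_filter, Finset.mem_range, Finset.mem_Ico]
          omega
  have hS : (∑ j : Fin n,
      sw i (∏ k ∈ Finset.univ.filter (fun k => k < j), u k) *
        ∏ k ∈ Finset.univ.filter (fun k => j < k), u k) =
      ∑ j ∈ Finset.range n,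
        sw i (∏ k ∈ Finset.range j, u' k) * ∏ k ∈ Finset.Ico (j + 1) n, u' k := by
    rw [← Fin.sum_univ_eq_sum_range
      (fun j => sw i (∏ k ∈ Finset.range j, u' k) * ∏ k ∈ Finset.Ico (j + 1) n, u' k) n]
    exact Finset.sum_congr rfl fun j _ => by rw [hlt j, hgt j]
  have key := tele i u' n hu'
  have hne : (X i - X (i + 1) : R) ≠ 0 := by
    intro h
    have := congrArg (MvPolynomial.eval (fun k => if k = i then 1 else 0)) h
    simp at this
  rw [hP, hS]
  set P : R := ∏ j ∈ Finset.range n, u' j with hPdef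
  set S : R := ∑ j ∈ Finset.range n,
      sw i (∏ k ∈ Finset.range j, u' k) * ∏ k ∈ Finset.Ico (j + 1) n, u' k with hSdef
  have h1 : sw i (X i * P) = X (i + 1) * sw i P := by
    unfold sw
    rw [map_mul, rename_X, Equiv.swap_apply_left]
  have h2 : sw i ((1 + bb * X (i + 1)) * (X i * P)) =
      (1 + bb * X i) * (X (i + 1) * sw i P) := by
    unfold sw bb
    simp [map_mul, map_add, map_one, rename_X, rename_C]
  constructor
  · apply mul_left_cancel₀ hne
    rw [hD (X i * P)]
    linear_combination -h1 + X (i + 1) * key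
  · apply mul_left_cancel₀ hne
    rw [hD ((1 + bb * X (i + 1)) * (X i * P))]
    linear_combination -h2 + X (i + 1) * (1 + bb * X i) * key

end
end

section
/- Define a right action ⋆ of words of positive integers on finite subsets S of ℤ_{>0}: for a single letter m, if no element of S is ≥ m, then S ⋆ m = S ∪ {m}; otherwise S ⋆ m = (S \ {m'}) ∪ {m} where m' is the smallest element of S with m' ≥ m. Then if two words w and w' are K-Knuth equivalent, S ⋆ w = S ⋆ w' for every finite S ⊆ ℤ_{>0}. -/
/-- The `⋆` action of a single letter `m` on a finite set `S`:
if no element of `S` is `≥ m`, then `S ⋆ m = S ∪ {m}`; otherwise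
`S ⋆ m = (S \ {m'}) ∪ {m}` where `m'` is the smallest element of `S` with `m' ≥ m`. -/
def starLetter (S : Finset ℕ) (m : ℕ) : Finset ℕ :=
  if h : (S.filter (fun s => m ≤ s)).Nonempty then
    insert m (S.erase ((S.filter (fun s => m ≤ s)).min' h))
  else insert m S

/-- The `⋆` action of a word, letter by letter from the left. -/
def star (S : Finset ℕ) (w : List ℕ) : Finset ℕ :=
  w.foldl starLetter S

lemma starLetter_min {S : Finset ℕ} {m m₀ : ℕ} (h1 : m₀ ∈ S) (h2 : m ≤ m₀)
    (h3 : ∀ s ∈ S, m ≤ s → m₀ ≤ s) :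
    starLetter S m = insert m (S.erase m₀) := by
  have hmem : m₀ ∈ S.filter (fun s => m ≤ s) := Finset.mem_filter.2 ⟨h1, h2⟩
  have hne : (S.filter (fun s => m ≤ s)).Nonempty := ⟨m₀, hmem⟩
  have hmin : (S.filter (fun s => m ≤ s)).min' hne = m₀ := by
    apply le_antisymm (Finset.min'_le _ _ hmem)
    have := Finset.min'_mem _ hne
    simp only [Finset.mem_filter] at this
    exact h3 _ this.1 this.2
  rw [starLetter, dif_pos hne, hmin]

lemma starLetter_all_lt {S : Finset ℕ} {m : ℕ} (h : ∀ s ∈ S, s < m) :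
    starLetter S m = insert m S := by
  rw [starLetter, dif_neg]
  rintro ⟨x, hx⟩
  simp only [Finset.mem_filter] at hx
  exact absurd (h x hx.1) (by omega)

lemma starLetter_fix {S : Finset ℕ} {m : ℕ} (h : m ∈ S) : starLetter S m = S := by
  rw [starLetter_min h le_rfl (fun s _ hs => hs), Finset.insert_erase h]

lemma mem_starLetter_self (S : Finset ℕ) (m : ℕ) : m ∈ starLetter S m := by
  rw [starLetter]; split <;> exact Finset.mem_insert_self _ _

/-- extract the minimum element `≥ m` as an opaque witness -/
lemma exists_min_ge {S : Finset ℕ} {y m : ℕ} (hy : y ∈ S) (hmy : m ≤ y) :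
    ∃ m₀, m₀ ∈ S ∧ m ≤ m₀ ∧ m₀ ≤ y ∧ ∀ s ∈ S, m ≤ s → m₀ ≤ s := by
  have hne : (S.filter (fun s => m ≤ s)).Nonempty := ⟨y, Finset.mem_filter.2 ⟨hy, hmy⟩⟩
  refine ⟨(S.filter (fun s => m ≤ s)).min' hne, ?_, ?_, ?_, ?_⟩
  · have := Finset.min'_mem _ hne
    exact (Finset.mem_filter.1 this).1
  · have := Finset.min'_mem _ hne
    exact (Finset.mem_filter.1 this).2
  · exact Finset.min'_le _ _ (Finset.mem_filter.2 ⟨hy, hmy⟩)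
  · exact fun s hs hms => Finset.min'_le _ _ (Finset.mem_filter.2 ⟨hs, hms⟩)

lemma mem_starLetter_of_lt {S : Finset ℕ} {x m : ℕ} (hx : x ∈ S) (hlt : x < m) :
    x ∈ starLetter S m := by
  rw [starLetter]; split
  · next h =>
    refine Finset.mem_insert_of_mem (Finset.mem_erase.2 ⟨?_, hx⟩)
    have := Finset.min'_mem _ h
    simp only [Finset.mem_filter] at this
    omega
  · exact Finset.mem_insert_of_mem hx

lemma mem_starLetter_of_witness {S : Finset ℕ} {x y m : ℕ} (hx : x ∈ S) (hy : y ∈ S)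
    (hmy : m ≤ y) (hyx : y < x) : x ∈ starLetter S m := by
  obtain ⟨m₀, hm₀S, hm₀m, hm₀y, hm₀min⟩ := exists_min_ge hy hmy
  rw [starLetter_min hm₀S hm₀m hm₀min]
  exact Finset.mem_insert_of_mem (Finset.mem_erase.2 ⟨by omega, hx⟩)

/-- key commutation: if `S` has an element in `[a, c)` with `a < c`, then the
actions of `a` and `c` commute. -/
lemma starLetter_comm {S : Finset ℕ} {a c t : ℕ} (hac : a < c) (ht : t ∈ S)
    (h1 : a ≤ t) (h2 : t < c) :
    starLetter (starLetter S a) c = starLetter (starLetter S c) a := by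
  obtain ⟨m₀, hm₀S, hm₀a, hm₀t, hm₀min⟩ := exists_min_ge ht h1
  have hm₀c : m₀ < c := by omega
  rw [starLetter_min hm₀S hm₀a hm₀min]
  by_cases hC : (S.filter (fun s => c ≤ s)).Nonempty
  · obtain ⟨y, hy⟩ := hC
    simp only [Finset.mem_filter] at hy
    obtain ⟨c₀, hc₀S, hc₀c, -, hc₀min⟩ := exists_min_ge hy.1 hy.2
    have hne₀ : m₀ ≠ c₀ := by omega
    rw [starLetter_min (S := insert a (S.erase m₀)) (m₀ := c₀)
      (Finset.mem_insert_of_mem (Finset.mem_erase.2 ⟨hne₀.symm, hc₀S⟩)) hc₀c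
      (by
        intro s hs hcs
        rcases Finset.mem_insert.1 hs with rfl | hs'
        · omega
        · exact hc₀min s (Finset.mem_of_mem_erase hs') hcs)]
    rw [starLetter_min hc₀S hc₀c hc₀min]
    rw [starLetter_min (S := insert c (S.erase c₀)) (m₀ := m₀)
      (Finset.mem_insert_of_mem (Finset.mem_erase.2 ⟨hne₀, hm₀S⟩)) hm₀a
      (by
        intro s hs has
        rcases Finset.mem_insert.1 hs with rfl | hs'
        · omega
        · exact hm₀min s (Finset.mem_of_mem_erase hs') has)]
    ext x
    by_cases hx : x ∈ S
    · simp only [Finset.mem_insert, Finset.mem_erase, hx, and_true, or_false, false_or, true_and, and_false, false_and, or_true, true_or]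
      omega
    · have h1' : x ≠ m₀ := by rintro rfl; exact hx hm₀S
      have h2' : x ≠ c₀ := by rintro rfl; exact hx hc₀S
      simp only [Finset.mem_insert, Finset.mem_erase, hx, and_false, or_false, false_or, false_and]
      omega
  · have hall : ∀ s ∈ S, s < c := by
      intro s hs
      by_contra hcon
      exact hC ⟨s, Finset.mem_filter.2 ⟨hs, by omega⟩⟩
    rw [starLetter_all_lt (S := insert a (S.erase m₀))
      (by
        intro s hs
        rcases Finset.mem_insert.1 hs with rfl | hs'
        · omega
        · exact hall s (Finset.mem_of_mem_erase hs'))]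
    rw [starLetter_all_lt hall]
    rw [starLetter_min (S := insert c S) (m₀ := m₀)
      (Finset.mem_insert_of_mem hm₀S) hm₀a
      (by
        intro s hs has
        rcases Finset.mem_insert.1 hs with rfl | hs'
        · omega
        · exact hm₀min s hs' has)]
    ext x
    by_cases hx : x ∈ S
    · simp only [Finset.mem_insert, Finset.mem_erase, hx, and_true, or_false, false_or, true_and, and_false, false_and, or_true, true_or]
      omega
    · have h1' : x ≠ m₀ := by rintro rfl; exact hx hm₀S
      simp only [Finset.mem_insert, Finset.mem_erase, hx, and_false, or_false, false_or, false_and]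
      omega

lemma starLetter_braid_lt {a b : ℕ} (hab : a < b) (S : Finset ℕ) :
    starLetter (starLetter (starLetter S a) b) a
      = starLetter (starLetter (starLetter S b) a) b := by
  by_cases hP : ∃ p ∈ S, a ≤ p ∧ p < b
  · obtain ⟨p, hpS, hpa, hpb⟩ := hP
    have hLHS := starLetter_fix (mem_starLetter_of_lt (mem_starLetter_self S a) hab)
    have hb1 : b ∈ starLetter S b := mem_starLetter_self S b
    have hp1 : p ∈ starLetter S b := mem_starLetter_of_lt hpS hpb
    have hb2 : b ∈ starLetter (starLetter S b) a := mem_starLetter_of_witness hb1 hp1 hpa hpb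
    rw [hLHS, starLetter_fix hb2]
    exact starLetter_comm hab hpS hpa hpb
  · push_neg at hP
    by_cases hB : ∃ q ∈ S, b ≤ q
    · obtain ⟨q, hqS, hqb⟩ := hB
      obtain ⟨b₀, hb₀S, hb₀b, hb₀q, hb₀min⟩ := exists_min_ge hqS hqb
      have hb₀mina : ∀ s ∈ S, a ≤ s → b₀ ≤ s := by
        intro s hs has
        have h1 := hP s hs has
        exact hb₀min s hs (by omega)
      rw [starLetter_min hb₀S (by omega : a ≤ b₀) hb₀mina,
          starLetter_min hb₀S hb₀b hb₀min]
      have hbnot : b ∉ S.erase b₀ := by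
        intro hmem
        obtain ⟨hne, hbS⟩ := Finset.mem_erase.1 hmem
        have := hb₀min b hbS le_rfl
        omega
      have hmid : starLetter (insert b (S.erase b₀)) a = insert a (S.erase b₀) := by
        rw [starLetter_min (m₀ := b) (Finset.mem_insert_self b _) hab.le
          (by
            intro s hs has
            rcases Finset.mem_insert.1 hs with rfl | hs'
            · exact le_rfl
            · have := hP s (Finset.mem_of_mem_erase hs') has; omega)]
        rw [Finset.erase_insert hbnot]
      rw [hmid]
      exact starLetter_fix (mem_starLetter_of_lt (Finset.mem_insert_self a _) hab)
    · push_neg at hB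
      have hlta : ∀ s ∈ S, s < a := by
        intro s hs
        by_contra h
        have h1 := hP s hs (by omega)
        have h2 := hB s hs
        omega
      have hltb : ∀ s ∈ insert a S, s < b := by
        intro s hs
        rcases Finset.mem_insert.1 hs with rfl | hs'
        · exact hab
        · exact lt_trans (hlta s hs') hab
      rw [starLetter_all_lt hlta,
          starLetter_all_lt (fun s hs => lt_trans (hlta s hs) hab),
          starLetter_all_lt hltb,
          starLetter_fix (Finset.mem_insert_of_mem (Finset.mem_insert_self a S))]
      have hmid : starLetter (insert b S) a = insert a S := by
        rw [starLetter_min (m₀ := b) (Finset.mem_insert_self b S) hab.le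
          (by
            intro s hs has
            rcases Finset.mem_insert.1 hs with rfl | hs'
            · exact le_rfl
            · exact absurd (hlta s hs') (by omega))]
        rw [Finset.erase_insert (fun h => absurd (hlta b h) (by omega))]
      rw [hmid, starLetter_all_lt hltb]

lemma starLetter_braid (a b : ℕ) (S : Finset ℕ) :
    starLetter (starLetter (starLetter S a) b) a
      = starLetter (starLetter (starLetter S b) a) b := by
  rcases lt_trichotomy a b with hab | rfl | hba
  · exact starLetter_braid_lt hab S
  · rfl
  · exact (starLetter_braid_lt hba S).symm

lemma starLetter_cancel {X : Finset ℕ} {b c : ℕ} (hbc : b < c) (hcX : c ∉ X)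
    (hall : ∀ s ∈ X, b ≤ s → c ≤ s) :
    starLetter (starLetter X c) b = starLetter X b := by
  by_cases hC : ∃ y ∈ X, c ≤ y
  · obtain ⟨y, hyX, hyc⟩ := hC
    obtain ⟨c₀, hc₀X, hc₀c, -, hc₀min⟩ := exists_min_ge hyX hyc
    rw [starLetter_min hc₀X hc₀c hc₀min]
    rw [starLetter_min (m₀ := c) (Finset.mem_insert_self c _) hbc.le
      (by
        intro s hs hbs
        rcases Finset.mem_insert.1 hs with rfl | hs'
        · exact le_rfl
        · exact hall s (Finset.mem_of_mem_erase hs') hbs)]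
    rw [Finset.erase_insert (fun h => hcX (Finset.mem_of_mem_erase h))]
    rw [starLetter_min hc₀X (by omega : b ≤ c₀)
      (fun s hs hbs => hc₀min s hs (hall s hs hbs))]
  · push_neg at hC
    have hltb : ∀ s ∈ X, s < b := by
      intro s hs
      by_contra h
      have h1 := hall s hs (by omega)
      have h2 := hC s hs
      omega
    rw [starLetter_all_lt (fun s hs => lt_of_lt_of_le (hltb s hs) (by omega))]
    rw [starLetter_min (m₀ := c) (Finset.mem_insert_self c X) hbc.le
      (by
        intro s hs hbs
        rcases Finset.mem_insert.1 hs with rfl | hs'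
        · exact le_rfl
        · exact absurd (hltb s hs') (by omega))]
    rw [Finset.erase_insert hcX, starLetter_all_lt hltb]

lemma starLetter_wr {a b c : ℕ} (hab : a < b) (hbc : b < c) (S : Finset ℕ) :
    starLetter (starLetter (starLetter S a) c) b
      = starLetter (starLetter (starLetter S c) a) b := by
  have hac : a < c := lt_trans hab hbc
  by_cases hAC : ∃ t ∈ S, a ≤ t ∧ t < c
  · obtain ⟨t, htS, hta, htc⟩ := hAC
    rw [starLetter_comm hac htS hta htc]
  · push_neg at hAC
    have hall : ∀ s ∈ S, a ≤ s → c ≤ s := by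
      intro s hs has
      have := hAC s hs has
      omega
    by_cases hC : ∃ y ∈ S, c ≤ y
    · obtain ⟨y, hyS, hyc⟩ := hC
      obtain ⟨r₀, hr₀S, hr₀c, -, hr₀min⟩ := exists_min_ge hyS hyc
      have hcnot : c ∉ S.erase r₀ := by
        intro h
        obtain ⟨hne, hcS⟩ := Finset.mem_erase.1 h
        have := hr₀min c hcS le_rfl
        omega
      rw [starLetter_min hr₀S (by omega : a ≤ r₀)
        (fun s hs has => hr₀min s hs (hall s hs has))]
      rw [starLetter_min hr₀S hr₀c hr₀min]
      rw [starLetter_min (m₀ := c) (Finset.mem_insert_self c _) hac.le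
        (by
          intro s hs has
          rcases Finset.mem_insert.1 hs with rfl | hs'
          · exact le_rfl
          · exact hall s (Finset.mem_of_mem_erase hs') has)]
      rw [Finset.erase_insert hcnot]
      apply starLetter_cancel hbc
      · intro h
        rcases Finset.mem_insert.1 h with h' | h'
        · omega
        · exact hcnot h'
      · intro s hs hbs
        rcases Finset.mem_insert.1 hs with rfl | hs'
        · omega
        · exact hall s (Finset.mem_of_mem_erase hs') (by omega)
    · push_neg at hC
      have hlta : ∀ s ∈ S, s < a := by
        intro s hs
        by_contra h
        have h1 := hall s hs (by omega)
        have h2 := hC s hs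
        omega
      have hcS : c ∉ S := fun h => absurd (hlta c h) (by omega)
      rw [starLetter_all_lt hlta]
      rw [starLetter_all_lt (fun s hs => lt_trans (hlta s hs) hac)]
      rw [starLetter_min (m₀ := c) (Finset.mem_insert_self c S) hac.le
        (by
          intro s hs has
          rcases Finset.mem_insert.1 hs with rfl | hs'
          · exact le_rfl
          · exact absurd (hlta s hs') (by omega))]
      rw [Finset.erase_insert hcS]
      apply starLetter_cancel hbc
      · intro h
        rcases Finset.mem_insert.1 h with h' | h'
        · omega
        · exact hcS h'
      · intro s hs hbs
        rcases Finset.mem_insert.1 hs with rfl | hs'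
        · omega
        · exact absurd (hlta s hs') (by omega)

/-- K-Knuth equivalence of words: the symmetric-transitive closure of
`u aa v ≡ u a v`, `u aba v ≡ u bab v`, `u bac v ≡ u bca v` (a < b < c), and
`u acb v ≡ u cab v` (a < b < c). -/
inductive KKnuth : List ℕ → List ℕ → Prop
  | idem (u v : List ℕ) (a : ℕ) : KKnuth (u ++ [a, a] ++ v) (u ++ [a] ++ v)
  | braid (u v : List ℕ) (a b : ℕ) : KKnuth (u ++ [a, b, a] ++ v) (u ++ [b, a, b] ++ v)
  | wl (u v : List ℕ) (a b c : ℕ) (h1 : a < b) (h2 : b < c) :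
      KKnuth (u ++ [b, a, c] ++ v) (u ++ [b, c, a] ++ v)
  | wr (u v : List ℕ) (a b c : ℕ) (h1 : a < b) (h2 : b < c) :
      KKnuth (u ++ [a, c, b] ++ v) (u ++ [c, a, b] ++ v)
  | refl (u : List ℕ) : KKnuth u u
  | symm {u v : List ℕ} : KKnuth u v → KKnuth v u
  | trans {u v w : List ℕ} : KKnuth u v → KKnuth v w → KKnuth u w

/-- K-Knuth equivalent words have the same `⋆` action on every finite set. -/
theorem stmt9 (w w' : List ℕ) (h : KKnuth w w') (S : Finset ℕ) :
    star S w = star S w' := by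
  induction h with
  | idem u v a =>
      simp only [_root_.star, List.foldl_append, List.foldl_cons, List.foldl_nil]
      rw [starLetter_fix (mem_starLetter_self _ a)]
  | braid u v a b =>
      simp only [_root_.star, List.foldl_append, List.foldl_cons, List.foldl_nil]
      rw [starLetter_braid]
  | wl u v a b c h1 h2 =>
      simp only [_root_.star, List.foldl_append, List.foldl_cons, List.foldl_nil]
      rw [starLetter_comm (lt_trans h1 h2) (mem_starLetter_self _ b) h1.le h2]
  | wr u v a b c h1 h2 =>
      simp only [_root_.star, List.foldl_append, List.foldl_cons, List.foldl_nil]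
      rw [starLetter_wr h1 h2]
  | refl u => rfl
  | symm _ ih => exact ih.symm
  | trans _ _ ih1 ih2 => exact ih1.trans ih2
end

section
/- For the ⋆-action of words on subsets of ℤ_{>0}, left multiplication is monotone: for any words w and v, ∅ ⋆ v ⊆ ∅ ⋆ (wv) as subsets of ℤ_{>0}. -/
lemma starLetter_mono {S T : Finset ℕ} (hST : S ⊆ T) (m : ℕ) :
    starLetter S m ⊆ starLetter T m := by
  unfold starLetter
  by_cases hS : (S.filter (fun s => m ≤ s)).Nonempty
  · have hT : (T.filter (fun s => m ≤ s)).Nonempty := by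
      obtain ⟨x, hx⟩ := hS
      obtain ⟨hx1, hx2⟩ := Finset.mem_filter.mp hx
      exact ⟨x, Finset.mem_filter.mpr ⟨hST hx1, hx2⟩⟩
    rw [dif_pos hS, dif_pos hT]
    intro x hx
    rcases Finset.mem_insert.mp hx with rfl | hx
    · exact Finset.mem_insert_self _ _
    · obtain ⟨hxne, hxS⟩ := Finset.mem_erase.mp hx
      apply Finset.mem_insert_of_mem
      refine Finset.mem_erase.mpr ⟨?_, hST hxS⟩
      intro hxe
      apply hxne
      have hxT : x ∈ T.filter (fun s => m ≤ s) := hxe ▸ Finset.min'_mem _ hT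
      have hmx : m ≤ x := (Finset.mem_filter.mp hxT).2
      have hxSf : x ∈ S.filter (fun s => m ≤ s) := Finset.mem_filter.mpr ⟨hxS, hmx⟩
      have h1 : (S.filter (fun s => m ≤ s)).min' hS ≤ x := Finset.min'_le _ _ hxSf
      have h2 : (T.filter (fun s => m ≤ s)).min' hT ≤ (S.filter (fun s => m ≤ s)).min' hS := by
        apply Finset.min'_le
        have := Finset.min'_mem _ hS
        obtain ⟨h3, h4⟩ := Finset.mem_filter.mp this
        exact Finset.mem_filter.mpr ⟨hST h3, h4⟩
      omega
  · rw [dif_neg hS]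
    by_cases hT : (T.filter (fun s => m ≤ s)).Nonempty
    · rw [dif_pos hT]
      intro x hx
      rcases Finset.mem_insert.mp hx with rfl | hx
      · exact Finset.mem_insert_self _ _
      · apply Finset.mem_insert_of_mem
        refine Finset.mem_erase.mpr ⟨?_, hST hx⟩
        intro hxe
        apply hS
        have hxT : x ∈ T.filter (fun s => m ≤ s) := hxe ▸ Finset.min'_mem _ hT
        exact ⟨x, Finset.mem_filter.mpr ⟨hx, (Finset.mem_filter.mp hxT).2⟩⟩
    · rw [dif_neg hT]
      exact Finset.insert_subset_insert _ hST

lemma star_mono {S T : Finset ℕ} (h : S ⊆ T) (v : List ℕ) : star S v ⊆ star T v := by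
  induction v generalizing S T with
  | nil => exact h
  | cons a v ih => exact ih (starLetter_mono h a)

/-- Left multiplication is monotone for the `⋆` action:
`∅ ⋆ v ⊆ ∅ ⋆ (wv)` for any words `w`, `v`. -/
theorem stmt10 (w v : List ℕ) : star ∅ v ⊆ star ∅ (w ++ v) := by
  have : star ∅ (w ++ v) = star (star ∅ w) v := by
    unfold _root_.star; rw [List.foldl_append]
  rw [this]
  exact star_mono (Finset.empty_subset _) v
end

section
/- If the reverses of two words w and w' are Knuth equivalent, then S ⋆ w = S ⋆ w' for every finite S ⊆ ℤ_{>0}, where ⋆ is the column-bumping action on sets. -/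
/-- Knuth (plactic) equivalence of words: generated by
`u bac v ≡ u bca v` and `u acb v ≡ u cab v` for `a < b < c`, together with
`u bba v ≡ u bab v` and `u baa v ≡ u aba v` for `a < b`. -/
inductive Knuth : List ℕ → List ℕ → Prop
  | wl (u v : List ℕ) (a b c : ℕ) (h1 : a < b) (h2 : b < c) :
      Knuth (u ++ [b, a, c] ++ v) (u ++ [b, c, a] ++ v)
  | wr (u v : List ℕ) (a b c : ℕ) (h1 : a < b) (h2 : b < c) :
      Knuth (u ++ [a, c, b] ++ v) (u ++ [c, a, b] ++ v)
  | eql (u v : List ℕ) (a b : ℕ) (h : a < b) :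
      Knuth (u ++ [b, b, a] ++ v) (u ++ [b, a, b] ++ v)
  | eqr (u v : List ℕ) (a b : ℕ) (h : a < b) :
      Knuth (u ++ [b, a, a] ++ v) (u ++ [a, b, a] ++ v)
  | refl (u : List ℕ) : Knuth u u
  | symm {u v : List ℕ} : Knuth u v → Knuth v u
  | trans {u v w : List ℕ} : Knuth u v → Knuth v w → Knuth u w

/-!
A Knuth relation between the reverses of two words rewrites three consecutive letters of the
words themselves, so it suffices to prove four identities between the actions of three-letter
words. They all follow from three facts about single letters `a ≤ c`: if `S` has an element in
`[a, c)` then `⋆ a` and `⋆ c` commute; if it has none then `S ⋆ c ⋆ a = S ⋆ a`;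
and `S ⋆ m = S` whenever `m ∈ S`.
-/

lemma mem_starLetter {S : Finset ℕ} {m x : ℕ} :
    x ∈ starLetter S m ↔ x = m ∨ x ∈ S ∧ (x < m ∨ ∃ y ∈ S, m ≤ y ∧ y < x) := by
  unfold starLetter
  split_ifs with h
  · set p := (S.filter (fun s => m ≤ s)).min' h
    have hp : p ∈ S ∧ m ≤ p := Finset.mem_filter.1 (Finset.min'_mem _ h)
    have hp_min : ∀ y ∈ S, m ≤ y → p ≤ y := fun y hy hmy =>
      Finset.min'_le _ y (Finset.mem_filter.2 ⟨hy, hmy⟩)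
    simp only [Finset.mem_insert, Finset.mem_erase]
    grind
  · simp only [Finset.not_nonempty_iff_eq_empty, Finset.filter_eq_empty_iff, not_le] at h
    simp only [Finset.mem_insert]
    grind

lemma starLetter_of_mem {S : Finset ℕ} {m : ℕ} (hm : m ∈ S) : starLetter S m = S := by
  ext x
  rw [mem_starLetter]
  grind

/-- The elements bumped by `a` and by `c` are then `≤ e` and `> e` respectively, so neither
insertion disturbs the other. -/
lemma starLetter_comm_s11 (S : Finset ℕ) {a c e : ℕ} (he : e ∈ S) (hae : a ≤ e) (hec : e < c) :
    starLetter (starLetter S c) a = starLetter (starLetter S a) c := by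
  ext x
  simp only [mem_starLetter]
  grind

lemma starLetter_starLetter_of_gap (S : Finset ℕ) {a c : ℕ} (hac : a ≤ c)
    (hgap : ∀ x ∈ S, a ≤ x → c ≤ x) :
    starLetter (starLetter S c) a = starLetter S a := by
  ext x
  simp only [mem_starLetter]
  constructor
  · grind
  · rintro (rfl | ⟨hx, hxa | ⟨y, hy, hay, hyx⟩⟩)
    · exact Or.inl rfl
    · grind
    · exact Or.inr ⟨by grind, Or.inr ⟨c, Or.inl rfl, hac, by grind⟩⟩

lemma star_nil (S : Finset ℕ) : star S [] = S := rfl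

lemma star_cons (S : Finset ℕ) (m : ℕ) (w : List ℕ) :
    star S (m :: w) = star (starLetter S m) w := rfl

lemma star_cab_eq_acb (S : Finset ℕ) {a b c : ℕ} (hab : a < b) (hbc : b < c) :
    star S [c, a, b] = star S [a, c, b] := by
  simp only [star_cons, star_nil]
  by_cases he : ∃ e ∈ S, a ≤ e ∧ e < c
  · obtain ⟨e, he, hae, hec⟩ := he
    rw [starLetter_comm_s11 S he hae hec]
  · push Not at he
    have hgap : ∀ x ∈ starLetter S a, b ≤ x → c ≤ x := by
      intro x hx hbx
      rcases mem_starLetter.1 hx with rfl | ⟨hxS, -⟩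
      · omega
      · exact he x hxS (by omega)
    rw [starLetter_starLetter_of_gap S (hab.trans hbc).le he,
      starLetter_starLetter_of_gap _ hbc.le hgap]

lemma star_bca_eq_bac (S : Finset ℕ) {a b c : ℕ} (hab : a < b) (hbc : b < c) :
    star S [b, c, a] = star S [b, a, c] := by
  simp only [star_cons, star_nil]
  exact starLetter_comm_s11 _ (mem_starLetter_self S b) hab.le hbc

lemma star_abb_eq_bab (S : Finset ℕ) {a b : ℕ} (hab : a < b) :
    star S [a, b, b] = star S [b, a, b] := by
  simp only [star_cons, star_nil]
  rw [starLetter_of_mem (mem_starLetter_self _ b)]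
  by_cases he : ∃ e ∈ S, a ≤ e ∧ e < b
  · obtain ⟨e, he, hae, heb⟩ := he
    rw [starLetter_comm_s11 S he hae heb, starLetter_of_mem (mem_starLetter_self _ b)]
  · push Not at he
    rw [starLetter_starLetter_of_gap S hab.le he]

lemma star_aab_eq_aba (S : Finset ℕ) {a b : ℕ} (hab : a < b) :
    star S [a, a, b] = star S [a, b, a] := by
  simp only [star_cons, star_nil]
  have ha : a ∈ starLetter (starLetter S a) b :=
    mem_starLetter.2 (Or.inr ⟨mem_starLetter_self S a, Or.inl hab⟩)
  rw [starLetter_of_mem (mem_starLetter_self S a), starLetter_of_mem ha]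

lemma star_append (S : Finset ℕ) (u v : List ℕ) : star S (u ++ v) = star (star S u) v :=
  List.foldl_append

lemma star_reverse_congr {x y : List ℕ} (hxy : ∀ T, star T x.reverse = star T y.reverse)
    (S : Finset ℕ) (u v : List ℕ) :
    star S (u ++ x ++ v).reverse = star S (u ++ y ++ v).reverse := by
  simp only [List.reverse_append, star_append, hxy]

lemma star_reverse_eq_of_knuth {u v : List ℕ} (h : Knuth u v) (S : Finset ℕ) :
    star S u.reverse = star S v.reverse := by
  induction h generalizing S with
  | wl u v a b c hab hbc =>
    exact star_reverse_congr (fun T => by simpa using star_cab_eq_acb T hab hbc) S u v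
  | wr u v a b c hab hbc =>
    exact star_reverse_congr (fun T => by simpa using star_bca_eq_bac T hab hbc) S u v
  | eql u v a b hab =>
    exact star_reverse_congr (fun T => by simpa using star_abb_eq_bab T hab) S u v
  | eqr u v a b hab =>
    exact star_reverse_congr (fun T => by simpa using star_aab_eq_aba T hab) S u v
  | refl u => rfl
  | symm _ ih => exact (ih S).symm
  | trans _ _ ih₁ ih₂ => exact (ih₁ S).trans (ih₂ S)

/-- If the reverses of two words `w` and `w'` are Knuth equivalent, then
`S ⋆ w = S ⋆ w'` for every finite `S`. -/
theorem stmt11 (w w' : List ℕ) (h : Knuth w.reverse w'.reverse) (S : Finset ℕ) :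
    star S w = star S w' := by
  simpa using star_reverse_eq_of_knuth h S
end

section
/- In a reverse set-valued tableau, let L(T) denote the reverse semistandard Young tableau obtained by replacing each set entry by its maximum. Then for a fixed RSSYT T of shape λ, the generating function Σ_{T' : L(T') = T} β^{ex(T')} x^{wt(T')} over reverse set-valued tableaux T' of shape λ with L(T') = T equals x^{wt(T)} · Π_{(s,k)} (1 + β x_k), where the product runs over pairs (s, k) of a box s in λ and a value k strictly less than the entry T(s) such that replacing the entry of T in box s by k yields a valid RSSYT. -/
open MvPolynomial
open scoped Classical

noncomputable section

/-- A Young diagram: a finite set of cells `(row, column)` closed under moving up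
and to the left. -/
def IsYoung (sh : Finset (ℕ × ℕ)) : Prop :=
  (∀ r c : ℕ, (r + 1, c) ∈ sh → (r, c) ∈ sh) ∧
  (∀ r c : ℕ, (r, c + 1) ∈ sh → (r, c) ∈ sh)

/-- A reverse semistandard Young tableau on the shape `sh`: entries weakly decrease
along rows (left to right) and strictly decrease down columns. -/
def IsRSSYT (sh : Finset (ℕ × ℕ)) (T : ℕ × ℕ → ℕ) : Prop :=
  (∀ r c : ℕ, (r, c) ∈ sh → (r, c + 1) ∈ sh → T (r, c + 1) ≤ T (r, c)) ∧
  (∀ r c : ℕ, (r, c) ∈ sh → (r + 1, c) ∈ sh → T (r + 1, c) < T (r, c))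

/-- A reverse set-valued tableau on the shape `sh`: each cell holds a nonempty
finite set (and `∅` outside the shape), the min of each entry is `≥` the max of the
entry to its right and `>` the max of the entry below. -/
def IsRSVT (sh : Finset (ℕ × ℕ)) (T : ℕ × ℕ → Finset ℕ) : Prop :=
  (∀ s ∈ sh, (T s).Nonempty) ∧ (∀ s, s ∉ sh → T s = ∅) ∧
  (∀ r c : ℕ, (r, c) ∈ sh → (r, c + 1) ∈ sh →
    ∀ a ∈ T (r, c), ∀ b ∈ T (r, c + 1), b ≤ a) ∧
  (∀ r c : ℕ, (r, c) ∈ sh → (r + 1, c) ∈ sh →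
    ∀ a ∈ T (r, c), ∀ b ∈ T (r + 1, c), b < a)

/-- Forward direction: any non-maximal value in a cell of an RSVT lying over `T`
can be substituted into `T` to give an RSSYT. -/
lemma aux_forward (sh : Finset (ℕ × ℕ)) (T : ℕ × ℕ → ℕ) (hT : IsRSSYT sh T)
    (T' : (ℕ × ℕ) → Finset ℕ) (h1 : IsRSVT sh T')
    (h2 : ∀ s ∈ sh, T s ∈ T' s ∧ ∀ v ∈ T' s, v ≤ T s)
    (s : ℕ × ℕ) (hs : s ∈ sh) (k : ℕ) (hk : k ∈ T' s) (hne : k ≠ T s) :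
    k < T s ∧ IsRSSYT sh (Function.update T s k) := by
  have hklt : k < T s := lt_of_le_of_ne ((h2 s hs).2 k hk) hne
  refine ⟨hklt, ?_, ?_⟩
  · intro r c hc hc1
    rcases eq_or_ne s ((r, c) : ℕ × ℕ) with h | h
    · subst h
      rw [Function.update_self, Function.update_of_ne (by simp)]
      exact h1.2.2.1 r c hc hc1 k hk (T (r, c + 1)) (h2 _ hc1).1
    · rw [Function.update_of_ne h.symm]
      rcases eq_or_ne s ((r, c + 1) : ℕ × ℕ) with h' | h'
      · subst h'
        rw [Function.update_self]
        exact le_trans hklt.le (hT.1 r c hc hc1)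
      · rw [Function.update_of_ne h'.symm]
        exact hT.1 r c hc hc1
  · intro r c hc hc1
    rcases eq_or_ne s ((r, c) : ℕ × ℕ) with h | h
    · subst h
      rw [Function.update_self, Function.update_of_ne (by simp)]
      exact h1.2.2.2 r c hc hc1 k hk (T (r + 1, c)) (h2 _ hc1).1
    · rw [Function.update_of_ne h.symm]
      rcases eq_or_ne s ((r + 1, c) : ℕ × ℕ) with h' | h'
      · subst h'
        rw [Function.update_self]
        exact lt_of_le_of_lt hklt.le (hT.2 r c hc hc1)
      · rw [Function.update_of_ne h'.symm]
        exact hT.2 r c hc hc1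

/-- Backward direction: adjoining to each cell any family of substitutable
values gives the row/column inequalities of an RSVT. -/
lemma aux_backward (sh : Finset (ℕ × ℕ)) (T : ℕ × ℕ → ℕ) (hT : IsRSSYT sh T)
    (E : ℕ × ℕ → Finset ℕ)
    (hE : ∀ s ∈ sh, ∀ k ∈ E s, k < T s ∧ IsRSSYT sh (Function.update T s k)) :
    (∀ r c : ℕ, (r, c) ∈ sh → (r, c + 1) ∈ sh →
      ∀ a ∈ insert (T (r, c)) (E (r, c)), ∀ b ∈ insert (T (r, c + 1)) (E (r, c + 1)), b ≤ a) ∧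
    (∀ r c : ℕ, (r, c) ∈ sh → (r + 1, c) ∈ sh →
      ∀ a ∈ insert (T (r, c)) (E (r, c)), ∀ b ∈ insert (T (r + 1, c)) (E (r + 1, c)), b < a) := by
  have key_row : ∀ r c : ℕ, (r, c) ∈ sh → (r, c + 1) ∈ sh →
      ∀ a ∈ insert (T (r, c)) (E (r, c)), T (r, c + 1) ≤ a := by
    intro r c hrc hrc1 a ha
    rcases Finset.mem_insert.mp ha with rfl | ha
    · exact hT.1 r c hrc hrc1
    · have h := (hE _ hrc a ha).2.1 r c hrc hrc1
      rwa [Function.update_self,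
        Function.update_of_ne (show ((r, c + 1) : ℕ × ℕ) ≠ (r, c) by simp)] at h
  have key_col : ∀ r c : ℕ, (r, c) ∈ sh → (r + 1, c) ∈ sh →
      ∀ a ∈ insert (T (r, c)) (E (r, c)), T (r + 1, c) < a := by
    intro r c hrc hrc1 a ha
    rcases Finset.mem_insert.mp ha with rfl | ha
    · exact hT.2 r c hrc hrc1
    · have h := (hE _ hrc a ha).2.2 r c hrc hrc1
      rwa [Function.update_self,
        Function.update_of_ne (show ((r + 1, c) : ℕ × ℕ) ≠ (r, c) by simp)] at h
  constructor
  · intro r c hrc hrc1 a ha b hb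
    rcases Finset.mem_insert.mp hb with rfl | hb
    · exact key_row r c hrc hrc1 a ha
    · exact le_trans (hE _ hrc1 b hb).1.le (key_row r c hrc hrc1 a ha)
  · intro r c hrc hrc1 a ha b hb
    rcases Finset.mem_insert.mp hb with rfl | hb
    · exact key_col r c hrc hrc1 a ha
    · exact lt_trans (hE _ hrc1 b hb).1 (key_col r c hrc hrc1 a ha)

/-- For a fixed RSSYT `T` of shape `λ`, the generating function
`Σ_{T' : L(T') = T} β^{ex(T')} x^{wt(T')}` over reverse set-valued tableaux `T'`
with `L(T') = T` (i.e. the maximum of each set entry of `T'` is the corresponding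
entry of `T`) equals `x^{wt(T)} · Π_{(s,k)} (1 + β x_k)`, the product over pairs of a
box `s` of `λ` and a value `k < T(s)` such that replacing the entry of `T` in box
`s` by `k` yields a valid RSSYT. -/
theorem stmt13 (sh : Finset (ℕ × ℕ)) (hsh : IsYoung sh)
    (T : ℕ × ℕ → ℕ) (hT : IsRSSYT sh T)
    (F : Finset ((ℕ × ℕ) → Finset ℕ))
    (hF : ∀ T', T' ∈ F ↔
      IsRSVT sh T' ∧ ∀ s ∈ sh, T s ∈ T' s ∧ ∀ v ∈ T' s, v ≤ T s) :
    ∑ T' ∈ F,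
        bb ^ ((∑ s ∈ sh, (T' s).card) - sh.card) * ∏ s ∈ sh, ∏ v ∈ T' s, X v =
      (∏ s ∈ sh, (X (T s) : R)) *
        ∏ p ∈ sh.sigma (fun s =>
            (Finset.range (T s)).filter (fun k => IsRSSYT sh (Function.update T s k))),
          (1 + bb * X p.2) := by
  classical
  set P : Finset ((_ : ℕ × ℕ) × ℕ) := sh.sigma (fun s =>
      (Finset.range (T s)).filter (fun k => IsRSSYT sh (Function.update T s k))) with hPdef
  have hmemP : ∀ p : (_ : ℕ × ℕ) × ℕ, p ∈ P ↔
      p.1 ∈ sh ∧ p.2 < T p.1 ∧ IsRSSYT sh (Function.update T p.1 p.2) := by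
    intro p
    simp [hPdef, Finset.mem_sigma, Finset.mem_filter, Finset.mem_range, and_assoc]
  have rhs_eq : (∏ s ∈ sh, (X (T s) : R)) * ∏ p ∈ P, (1 + bb * X p.2)
      = ∑ S ∈ P.powerset,
          (∏ s ∈ sh, (X (T s) : R)) * (bb ^ S.card * ∏ p ∈ S, X p.2) := by
    have h1 : ∏ p ∈ P, ((1 : R) + bb * X p.2)
        = ∑ t ∈ P.powerset, (∏ p ∈ t, bb * X p.2) * ∏ p ∈ P \ t, (1 : R) := by
      rw [← Finset.prod_add]
      exact Finset.prod_congr rfl fun p _ => add_comm _ _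
    rw [h1, Finset.mul_sum]
    refine Finset.sum_congr rfl fun S hS => ?_
    rw [Finset.prod_const_one, mul_one, Finset.prod_mul_distrib, Finset.prod_const]
  rw [rhs_eq]
  refine Finset.sum_bij'
    (i := fun T' _ => sh.sigma fun s => (T' s).erase (T s))
    (j := fun S _ => fun s => if s ∈ sh then
        insert (T s) ((Finset.range (T s)).filter
          fun k => (⟨s, k⟩ : (_ : ℕ × ℕ) × ℕ) ∈ S) else ∅)
    ?_ ?_ ?_ ?_ ?_
  · -- hi : image lands in powerset
    intro T' hT'
    obtain ⟨h1, h2⟩ := (hF T').mp hT'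
    rw [Finset.mem_powerset]
    intro p hp
    rw [Finset.mem_sigma] at hp
    obtain ⟨hs, hk⟩ := hp
    rw [Finset.mem_erase] at hk
    have := aux_forward sh T hT T' h1 h2 p.1 hs p.2 hk.2 hk.1
    exact (hmemP p).mpr ⟨hs, this.1, this.2⟩
  · -- hj : inverse lands in F
    intro S hS
    rw [Finset.mem_powerset] at hS
    set E : ℕ × ℕ → Finset ℕ := fun s =>
      (Finset.range (T s)).filter fun k => (⟨s, k⟩ : (_ : ℕ × ℕ) × ℕ) ∈ S with hEdef
    have hE : ∀ s ∈ sh, ∀ k ∈ E s, k < T s ∧ IsRSSYT sh (Function.update T s k) := by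
      intro s hs k hk
      rw [hEdef, Finset.mem_filter, Finset.mem_range] at hk
      have := (hmemP ⟨s, k⟩).mp (hS hk.2)
      exact ⟨hk.1, this.2.2⟩
    obtain ⟨krow, kcol⟩ := aux_backward sh T hT E hE
    rw [hF]
    refine ⟨⟨?_, ?_, ?_, ?_⟩, ?_⟩
    · intro s hs
      simp [hs]
    · intro s hs
      simp [hs]
    · intro r c hc hc1 a ha b hb
      simp only [if_pos hc] at ha
      simp only [if_pos hc1] at hb
      exact krow r c hc hc1 a ha b hb
    · intro r c hc hc1 a ha b hb
      simp only [if_pos hc] at ha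
      simp only [if_pos hc1] at hb
      exact kcol r c hc hc1 a ha b hb
    · intro s hs
      refine ⟨by simp [hs], ?_⟩
      intro v hv
      simp only [if_pos hs, Finset.mem_insert] at hv
      rcases hv with rfl | hv
      · exact le_refl _
      · exact (hE s hs v hv).1.le
  · -- left inverse : j (i T') = T'
    intro T' hT'
    obtain ⟨h1, h2⟩ := (hF T').mp hT'
    funext s
    by_cases hs : s ∈ sh
    · simp only [if_pos hs]
      have hfilter : (Finset.range (T s)).filter
          (fun k => (⟨s, k⟩ : (_ : ℕ × ℕ) × ℕ) ∈ sh.sigma fun t => (T' t).erase (T t))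
          = (T' s).erase (T s) := by
        ext k
        simp only [Finset.mem_filter, Finset.mem_range, Finset.mem_sigma, Finset.mem_erase]
        constructor
        · rintro ⟨_, _, hk⟩
          exact hk
        · intro hk
          exact ⟨lt_of_le_of_ne ((h2 s hs).2 k hk.2) hk.1, hs, hk⟩
      rw [hfilter, Finset.insert_erase (h2 s hs).1]
    · simp only [if_neg hs]
      exact (h1.2.1 s hs).symm
  · -- right inverse : i (j S) = S
    intro S hS
    rw [Finset.mem_powerset] at hS
    ext p
    rcases p with ⟨s, k⟩
    rw [Finset.mem_sigma, Finset.mem_erase]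
    constructor
    · rintro ⟨hs, hne, hk⟩
      simp only [if_pos hs, Finset.mem_insert, Finset.mem_filter] at hk
      rcases hk with h | h
      · exact absurd h hne
      · exact h.2
    · intro hp
      have := (hmemP ⟨s, k⟩).mp (hS hp)
      refine ⟨this.1, Nat.ne_of_lt this.2.1, ?_⟩
      simp only [if_pos this.1, Finset.mem_insert, Finset.mem_filter, Finset.mem_range]
      exact Or.inr ⟨this.2.1, hp⟩
  · -- values match
    intro T' hT'
    obtain ⟨h1, h2⟩ := (hF T').mp hT'
    have hcard : ∀ s ∈ sh, (T' s).card = ((T' s).erase (T s)).card + 1 := by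
      intro s hs
      rw [Finset.card_erase_of_mem (h2 s hs).1]
      have : 1 ≤ (T' s).card := Finset.card_pos.mpr ⟨T s, (h2 s hs).1⟩
      omega
    have hsum : (∑ s ∈ sh, (T' s).card)
        = (∑ s ∈ sh, ((T' s).erase (T s)).card) + sh.card := by
      rw [Finset.sum_congr rfl hcard, Finset.sum_add_distrib, Finset.sum_const, smul_eq_mul,
        mul_one]
    have hpow : (∑ s ∈ sh, (T' s).card) - sh.card
        = (sh.sigma fun s => (T' s).erase (T s)).card := by
      rw [Finset.card_sigma, hsum]
      omega
    have hprod : ∏ s ∈ sh, ∏ v ∈ T' s, (X v : R)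
        = (∏ s ∈ sh, X (T s)) *
            ∏ p ∈ sh.sigma (fun s => (T' s).erase (T s)), X p.2 := by
      rw [Finset.prod_sigma, ← Finset.prod_mul_distrib]
      exact Finset.prod_congr rfl fun s hs =>
        (Finset.mul_prod_erase (T' s) (fun v => (X v : R)) (h2 s hs).1).symm
    rw [hpow, hprod]
    ring

end
end

section
/- In Hecke column insertion into decreasing tableaux, the Pieri property holds: if x_1 is Hecke-inserted into a decreasing tableau T ending at box c_1, and then x_2 is Hecke-inserted into the result ending at box c_2, then c_2 is strictly to the right of c_1 if and only if x_1 < x_2. -/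
open scoped Classical

noncomputable section

/-- A decreasing tableau, represented by its list of columns (each column listed
top to bottom): entries strictly decrease down each column, column lengths weakly
decrease left to right, and entries strictly decrease along rows left to right. -/
def IsDecTab (T : List (List ℕ)) : Prop :=
  (∀ col ∈ T, List.Chain' (· > ·) col) ∧
  List.Chain' (fun C D : List ℕ => D.length ≤ C.length ∧
    ∀ r : ℕ, r < D.length → D.getD r 0 < C.getD r 0) T

/-- Replace column `c` of `T` by `C` (appending a new column if `c = T.length`). -/
def setCol (T : List (List ℕ)) (c : ℕ) (C : List ℕ) : List (List ℕ) :=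
  if c < T.length then T.set c C else T ++ [C]

/-- The column index of the rightmost box in row `r` of `T`. -/
def rowEnd (T : List (List ℕ)) (r : ℕ) : ℕ :=
  (T.filter (fun col => decide (r < col.length))).length - 1

/-- Hecke column insertion of `x` into the decreasing tableau `T`, starting at
column `c` (fuelled recursion; the fuel is always sufficient when it is larger than
the number of columns).  Returns the resulting tableau, the (column index of the)
box where the insertion ends, and whether a new box was added.

At each column: if `x` is `≤` all entries of the column, no number is output; `x`
is appended at the bottom of the column if the result is a decreasing tableau (the
new box is the ending box), and otherwise the tableau is unchanged and the ending
box is the rightmost box of the row containing the bottom entry of the column.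
Otherwise `x` bumps the entry `y < x` of the column whose replacement by `x` could
keep the column decreasing (the largest entry `< x`); `y` is replaced by `x`
provided the result is still a decreasing tableau, and `y` is inserted into the
next column. -/
def heckeGo : ℕ → List (List ℕ) → ℕ → ℕ → List (List ℕ) × ℕ × Bool
  | 0, T, c, _ => (T, c, false)
  | fuel + 1, T, c, x =>
    let C := T.getD c []
    if ∀ y ∈ C, x ≤ y then
      let T' := setCol T c (C ++ [x])
      if IsDecTab T' then (T', c, true)
      else (T, rowEnd T (C.length - 1), false)
    else
      let y := (C.filter (fun z => decide (z < x))).foldr max 0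
      let C' := C.map (fun z => if z = y then x else z)
      let T' := if IsDecTab (T.set c C') then T.set c C' else T
      heckeGo fuel T' (c + 1) y

/-- Hecke column insertion of `x` into the decreasing tableau `T`. -/
def heckeInsert (T : List (List ℕ)) (x : ℕ) : List (List ℕ) × ℕ × Bool :=
  heckeGo (T.length + 2) T 0 x

/-!
Follow both insertions column by column, the second one reading the columns left behind by the
first, and let `v` and `u` be the values they carry into the current column `c`. While both bump,
`v < u` persists exactly when `x₁ < x₂`. If `v < u`, the column left by the first bump contains
an entry strictly between the value `y` it bumped and `u` (either `v` itself, or the entry whose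
position blocked replacing `y` by `v`), so the second bumps a value above `y`; if `u ≤ v`, every
entry below `u` in that column was already below `v`, so the second bumps a value at most `y`.

When the first insertion stops in column `c`, it either adds a box at the bottom of `c` or ends at
the end of the row of the bottom box of `c`. A larger value then bumps in column `c` and keeps
bumping along that whole row, ending strictly to its right; a weakly smaller value stops in column
`c` too, and ends at `c` or at that same row end. If only the second insertion stops, it ends at
most at the end of the row of the bottom box of its column, and the first insertion, which bumped
there, leaves every column beyond its ending box shorter than that column.

All this relies on the value carried into column `c` being smaller than the top entry of column
`c - 1`, which keeps a stopping column nonempty when no box can be added to it.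
-/

theorem List.isChain_iff_getD {α : Type*} {R : α → α → Prop} {l : List α} (d : α) :
    l.IsChain R ↔ ∀ i, i + 1 < l.length → R (l.getD i d) (l.getD (i + 1) d) := by
  rw [List.isChain_iff_getElem]
  refine forall_congr' fun i => forall_congr' fun hi => ?_
  rw [List.getD_eq_getElem _ _ hi, List.getD_eq_getElem _ _ (Nat.lt_of_succ_lt hi)]

theorem List.getD_set {α : Type*} (l : List α) (i j : ℕ) (a d : α) :
    (l.set i a).getD j d = if j = i ∧ i < l.length then a else l.getD j d := by
  rcases lt_or_ge j l.length with hj | hj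
  · rw [List.getD_eq_getElem _ _ (by simpa using hj), List.getD_eq_getElem _ _ hj,
      List.getElem_set]
    grind
  · rw [List.getD_eq_default _ _ (by simpa using hj), List.getD_eq_default _ _ hj]
    grind

theorem List.getD_append_singleton {α : Type*} (l : List α) (j : ℕ) (a d : α) :
    (l ++ [a]).getD j d = if j = l.length then a else l.getD j d := by
  rcases lt_trichotomy j l.length with h | rfl | h
  · rw [List.getD_append _ _ _ _ h, if_neg h.ne]
  · simp
  · rw [List.getD_append_right _ _ _ _ h.le, List.getD_eq_default _ _ h.le, if_neg h.ne',
      List.getD_eq_default]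
    simp only [List.length_singleton]
    omega

theorem List.map_ite_eq_set {α : Type*} [DecidableEq α] {l : List α} (hl : l.Nodup) {r : ℕ}
    (hr : r < l.length) (x : α) : l.map (fun z => if z = l[r] then x else z) = l.set r x := by
  refine List.ext_getElem (by simp) fun i _ _ => ?_
  rw [List.getElem_map, List.getElem_set]
  by_cases hi : r = i
  · subst hi; simp
  · rw [if_neg hi, if_neg fun h => hi ((hl.getElem_inj_iff).1 h).symm]

/-! ## Columns, entries and rows -/

def col (T : List (List ℕ)) (c : ℕ) : List ℕ := T.getD c []

def colLen (T : List (List ℕ)) (c : ℕ) : ℕ := (col T c).length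

def entry (T : List (List ℕ)) (c r : ℕ) : ℕ := (col T c).getD r 0

def rowLen (T : List (List ℕ)) (r : ℕ) : ℕ :=
  (T.filter (fun C => decide (r < C.length))).length

theorem rowEnd_eq_rowLen_sub_one (T : List (List ℕ)) (r : ℕ) : rowEnd T r = rowLen T r - 1 :=
  rfl

theorem col_of_length_le {T : List (List ℕ)} {c : ℕ} (h : T.length ≤ c) : col T c = [] :=
  List.getD_eq_default _ _ h

theorem lt_length_of_colLen_pos {T : List (List ℕ)} {c : ℕ} (h : 0 < colLen T c) :
    c < T.length := by
  by_contra! hc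
  simp [colLen, col_of_length_le hc] at h

theorem entry_of_colLen_le {T : List (List ℕ)} {c r : ℕ} (h : colLen T c ≤ r) :
    entry T c r = 0 :=
  List.getD_eq_default _ _ h

theorem mem_col_iff {T : List (List ℕ)} {c z : ℕ} :
    z ∈ col T c ↔ ∃ r < colLen T c, entry T c r = z := by
  simp only [List.mem_iff_getElem, colLen, entry]
  exact exists_congr fun r => ⟨fun ⟨h, e⟩ => ⟨h, by rw [List.getD_eq_getElem _ _ h, e]⟩,
    fun ⟨h, e⟩ => ⟨h, by rw [← e, List.getD_eq_getElem _ _ h]⟩⟩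

theorem entry_mem_col {T : List (List ℕ)} {c r : ℕ} (h : r < colLen T c) :
    entry T c r ∈ col T c :=
  mem_col_iff.2 ⟨r, h, rfl⟩

theorem isDecTab_iff {T : List (List ℕ)} : IsDecTab T ↔
    (∀ c r, r + 1 < colLen T c → entry T c (r + 1) < entry T c r) ∧
    (∀ c, colLen T (c + 1) ≤ colLen T c) ∧
    (∀ c r, r < colLen T (c + 1) → entry T (c + 1) r < entry T c r) := by
  have hcols : (∀ C ∈ T, C.IsChain (· > ·)) ↔
      ∀ c r, r + 1 < colLen T c → entry T c (r + 1) < entry T c r := by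
    simp only [List.isChain_iff_getD 0, List.forall_mem_iff_getElem, colLen, entry, col]
    refine ⟨fun h c => ?_, fun h c hc => by simpa only [List.getD_eq_getElem _ _ hc] using h c⟩
    rcases lt_or_ge c T.length with hc | hc
    · simpa only [List.getD_eq_getElem _ _ hc] using h c hc
    · simp only [List.getD_eq_default _ _ hc, List.length_nil]
      omega
  have hrows : List.IsChain (fun C D : List ℕ => D.length ≤ C.length ∧
      ∀ r : ℕ, r < D.length → D.getD r 0 < C.getD r 0) T ↔
      (∀ c, colLen T (c + 1) ≤ colLen T c) ∧
      (∀ c r, r < colLen T (c + 1) → entry T (c + 1) r < entry T c r) := by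
    rw [List.isChain_iff_getD [], ← forall_and]
    refine forall_congr' fun c => ⟨fun h => ?_, fun h _ => h⟩
    rcases lt_or_ge (c + 1) T.length with hc | hc
    · exact h hc
    · simp [colLen, entry, col_of_length_le hc]
  exact and_congr hcols hrows

section IsDecTab

variable {T : List (List ℕ)}

theorem IsDecTab.entry_succ_lt (hT : IsDecTab T) {c r : ℕ} (h : r + 1 < colLen T c) :
    entry T c (r + 1) < entry T c r :=
  (isDecTab_iff.1 hT).1 c r h

theorem IsDecTab.colLen_succ_le (hT : IsDecTab T) (c : ℕ) : colLen T (c + 1) ≤ colLen T c :=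
  (isDecTab_iff.1 hT).2.1 c

theorem IsDecTab.entry_col_succ_lt (hT : IsDecTab T) {c r : ℕ} (h : r < colLen T (c + 1)) :
    entry T (c + 1) r < entry T c r :=
  (isDecTab_iff.1 hT).2.2 c r h

theorem IsDecTab.colLen_antitone (hT : IsDecTab T) : Antitone (colLen T) :=
  antitone_nat_of_succ_le hT.colLen_succ_le

theorem IsDecTab.entry_lt_entry_pred (hT : IsDecTab T) {c r : ℕ} (hc : 0 < c)
    (h : r < colLen T c) : entry T c r < entry T (c - 1) r := by
  obtain ⟨c, rfl⟩ := Nat.exists_eq_add_one.2 hc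
  exact hT.entry_col_succ_lt h

theorem IsDecTab.entry_lt_entry (hT : IsDecTab T) {c r r' : ℕ} (hrr : r' < r)
    (hr : r < colLen T c) : entry T c r < entry T c r' := by
  induction r, hrr using Nat.le_induction with
  | base => exact hT.entry_succ_lt hr
  | succ r _ ih => exact (hT.entry_succ_lt hr).trans (ih (by omega))

theorem IsDecTab.entry_le_entry (hT : IsDecTab T) {c r r' : ℕ} (hrr : r' ≤ r)
    (hr : r < colLen T c) : entry T c r ≤ entry T c r' := by
  rcases hrr.lt_or_eq with h | rfl
  exacts [(hT.entry_lt_entry h hr).le, le_rfl]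

theorem IsDecTab.entry_bottom_le (hT : IsDecTab T) {c z : ℕ} (hz : z ∈ col T c) :
    entry T c (colLen T c - 1) ≤ z := by
  obtain ⟨r, hr, rfl⟩ := mem_col_iff.1 hz
  exact hT.entry_le_entry (by omega) (by omega)

theorem IsDecTab.nodup_col (hT : IsDecTab T) (c : ℕ) : (col T c).Nodup := by
  rcases lt_or_ge c T.length with hc | hc
  · have hchain : (col T c).IsChain (· > ·) :=
      hT.1 _ (by rw [col, List.getD_eq_getElem _ _ hc]; exact List.getElem_mem hc)
    exact hchain.pairwise.imp ne_of_gt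
  · rw [col_of_length_le hc]; exact List.nodup_nil

end IsDecTab

theorem lt_rowLen_iff {T : List (List ℕ)} (hT : Antitone (colLen T)) {r c : ℕ} :
    c < rowLen T r ↔ r < colLen T c := by
  induction T generalizing c with
  | nil => simp [rowLen, colLen, col]
  | cons C T ih =>
    have ih := @ih fun a b hab => hT (Nat.succ_le_succ hab)
    have hsucc (c : ℕ) : colLen (C :: T) (c + 1) = colLen T c := rfl
    have hzero : colLen (C :: T) 0 = C.length := rfl
    by_cases hC : r < C.length
    · have hlen : rowLen (C :: T) r = rowLen T r + 1 := by simp [rowLen, hC]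
      cases c <;> simp [hlen, hsucc, hzero, hC, ih]
    · have hlen : rowLen (C :: T) r = rowLen T r := by simp [rowLen, hC]
      have hshort (c : ℕ) : ¬ r < colLen T c := fun h =>
        hC (hzero ▸ (h.trans_le (hsucc c ▸ hT (Nat.zero_le (c + 1)))))
      have hzero' : rowLen T r = 0 := Nat.eq_zero_of_not_pos (ih.not.2 (hshort 0))
      cases c <;> simp [hlen, hzero', hsucc, hzero, hC, hshort]

theorem rowLen_le_iff {T : List (List ℕ)} (hT : Antitone (colLen T)) {r c : ℕ} :
    rowLen T r ≤ c ↔ colLen T c ≤ r := by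
  simpa only [not_lt] using (lt_rowLen_iff hT).not

theorem IsDecTab.le_rowEnd {T : List (List ℕ)} (hT : IsDecTab T) {c r : ℕ}
    (h : r < colLen T c) : c ≤ rowEnd T r := by
  have := (lt_rowLen_iff hT.colLen_antitone).2 h
  rw [rowEnd_eq_rowLen_sub_one]; omega

theorem IsDecTab.rowEnd_le {T : List (List ℕ)} (hT : IsDecTab T) {k r : ℕ}
    (h : colLen T (k + 1) ≤ r) : rowEnd T r ≤ k := by
  have := (rowLen_le_iff hT.colLen_antitone).2 h
  rw [rowEnd_eq_rowLen_sub_one]; omega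

theorem rowLen_eq_of_colLen_eq {T T' : List (List ℕ)} (hT : Antitone (colLen T))
    (hT' : Antitone (colLen T')) {r c : ℕ} (hr : r < colLen T c)
    (h : ∀ j, c ≤ j → colLen T' j = colLen T j) : rowLen T' r = rowLen T r := by
  refine eq_of_forall_lt_iff fun j => ?_
  rw [lt_rowLen_iff hT, lt_rowLen_iff hT']
  rcases le_total c j with hj | hj
  · rw [h j hj]
  · exact iff_of_true ((hr.trans_le (h c le_rfl).ge).trans_le (hT' hj)) (hr.trans_le (hT hj))

theorem rowEnd_eq_of_col_eq {A B : List (List ℕ)} (hA : IsDecTab A) (hB : IsDecTab B) {c : ℕ}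
    (hcol : ∀ j, c ≤ j → col B j = col A j) (hpos : 0 < colLen A c) :
    rowEnd B (colLen B c - 1) = rowEnd A (colLen A c - 1) := by
  have hlen (j : ℕ) (hj : c ≤ j) : colLen B j = colLen A j := congrArg List.length (hcol j hj)
  rw [hlen c le_rfl, rowEnd_eq_rowLen_sub_one, rowEnd_eq_rowLen_sub_one,
    rowLen_eq_of_colLen_eq hA.colLen_antitone hB.colLen_antitone (by omega) hlen]

/-! ## Changing one box -/

theorem col_set (T : List (List ℕ)) (c : ℕ) (C : List ℕ) (j : ℕ) :
    col (T.set c C) j = if j = c ∧ c < T.length then C else col T j := by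
  simp only [col, List.getD_set]

theorem col_setCol {T : List (List ℕ)} {c : ℕ} (hc : c ≤ T.length) (C : List ℕ) (j : ℕ) :
    col (setCol T c C) j = if j = c then C else col T j := by
  by_cases h : c < T.length
  · rw [setCol, if_pos h, col_set]
    simp only [h, and_true]
  · rw [setCol, if_neg h, col, List.getD_append_singleton, show T.length = c by omega, col]

theorem colLen_set_set (T : List (List ℕ)) (c r x j : ℕ) :
    colLen (T.set c ((col T c).set r x)) j = colLen T j := by
  rw [colLen, col_set]
  split_ifs with h
  · simp [colLen, h.1]
  · rfl

theorem entry_set_set {T : List (List ℕ)} {c r : ℕ} (hr : r < colLen T c) (x j r' : ℕ) :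
    entry (T.set c ((col T c).set r x)) j r' = if j = c ∧ r' = r then x else entry T j r' := by
  rw [entry, col_set]
  by_cases h : j = c
  · have hc := lt_length_of_colLen_pos (Nat.zero_lt_of_lt hr)
    simp only [h, hc, and_true, if_true, true_and, List.getD_set,
      show r < (col T c).length from hr, entry]
  · simp only [h, if_false, false_and, entry]

theorem colLen_setCol_append {T : List (List ℕ)} {c : ℕ} (hc : c ≤ T.length) (x j : ℕ) :
    colLen (setCol T c (col T c ++ [x])) j = if j = c then colLen T c + 1 else colLen T j := by
  rw [colLen, col_setCol hc]
  split_ifs <;> simp [colLen]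

theorem entry_setCol_append {T : List (List ℕ)} {c : ℕ} (hc : c ≤ T.length) (x j r : ℕ) :
    entry (setCol T c (col T c ++ [x])) j r =
      if j = c ∧ r = colLen T c then x else entry T j r := by
  rw [entry, col_setCol hc]
  by_cases h : j = c
  · simp only [h, if_true, true_and, List.getD_append_singleton, entry, colLen]
  · simp only [h, if_false, false_and, entry]

/-- `T'` is `T` with the box `(c, r)` set to `x`; for `r = colLen T c` this adds a box at the
bottom of column `c`. -/
theorem isDecTab_of_update {T T' : List (List ℕ)} (hT : IsDecTab T) {c r x : ℕ}
    (hr : r ≤ colLen T c)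
    (hlen : ∀ j, colLen T' j = if j = c then max (colLen T c) (r + 1) else colLen T j)
    (hent : ∀ j r', entry T' j r' = if j = c ∧ r' = r then x else entry T j r')
    (habove : r = 0 ∨ x < entry T c (r - 1))
    (hbelow : r + 1 < colLen T c → entry T c (r + 1) < x)
    (hleft : c = 0 ∨ (r < colLen T (c - 1) ∧ x < entry T (c - 1) r))
    (hright : r < colLen T (c + 1) → entry T (c + 1) r < x) : IsDecTab T' := by
  rw [isDecTab_iff]
  refine ⟨fun j r' h => ?_, fun j => ?_, fun j r' h => ?_⟩
  · have := fun hj => hT.entry_succ_lt (c := j) (r := r') hj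
    simp only [hlen, hent] at h ⊢
    grind
  · have := hT.colLen_succ_le j
    simp only [hlen]
    grind
  · have := fun hj => hT.entry_col_succ_lt (c := j) (r := r') hj
    have := hT.colLen_succ_le j
    simp only [hlen, hent] at h ⊢
    grind

theorem isDecTab_set_entry {T : List (List ℕ)} (hT : IsDecTab T) {c r x : ℕ}
    (hr : r < colLen T c) (hx : entry T c r < x) (habove : r = 0 ∨ x < entry T c (r - 1))
    (hleft : c = 0 ∨ x < entry T (c - 1) r) :
    IsDecTab (T.set c ((col T c).set r x)) := by
  refine isDecTab_of_update hT hr.le (fun j => ?_) (entry_set_set hr x) habove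
    (fun h => (hT.entry_succ_lt h).trans hx) ?_ (fun h => (hT.entry_col_succ_lt h).trans hx)
  · rw [colLen_set_set]
    split_ifs with h
    · subst h; exact (max_eq_left hr).symm
    · rfl
  · have := hT.colLen_antitone (Nat.sub_le c 1)
    rcases Nat.eq_zero_or_pos c with h0 | h0
    exacts [Or.inl h0, Or.inr ⟨by omega, hleft.resolve_left h0.ne'⟩]

theorem isDecTab_setCol_append {T : List (List ℕ)} (hT : IsDecTab T) {c x : ℕ}
    (hbot : colLen T c = 0 ∨ x < entry T c (colLen T c - 1))
    (hleft : c = 0 ∨ (colLen T c < colLen T (c - 1) ∧ x < entry T (c - 1) (colLen T c))) :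
    IsDecTab (setCol T c (col T c ++ [x])) := by
  have hc : c ≤ T.length := by
    by_contra! hc
    have : colLen T (c - 1) = 0 := by
      simp [colLen, col_of_length_le (show T.length ≤ c - 1 by omega)]
    omega
  refine isDecTab_of_update hT le_rfl (fun j => ?_) (entry_setCol_append hc x) hbot
    (by omega) hleft (fun h => absurd (h.trans_le (hT.colLen_succ_le c)) (lt_irrefl _))
  rw [colLen_setCol_append hc]
  split_ifs <;> omega

theorem IsDecTab.append_blocked {T : List (List ℕ)} (hT : IsDecTab T) {c x : ℕ}
    (hfail : ¬ IsDecTab (setCol T c (col T c ++ [x]))) :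
    (0 < colLen T c ∧ entry T c (colLen T c - 1) ≤ x) ∨
      (0 < c ∧ (colLen T (c - 1) ≤ colLen T c ∨ entry T (c - 1) (colLen T c) ≤ x)) := by
  by_contra! h
  refine hfail (isDecTab_setCol_append hT ?_ ?_)
  · rcases Nat.eq_zero_or_pos (colLen T c) with h0 | h0
    exacts [Or.inl h0, Or.inr (h.1 h0)]
  · rcases Nat.eq_zero_or_pos c with h0 | h0
    exacts [Or.inl h0, Or.inr (h.2 h0)]

theorem IsDecTab.replace_blocked {T : List (List ℕ)} (hT : IsDecTab T) {c r x : ℕ}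
    (hr : r < colLen T c) (hx : entry T c r < x)
    (hfail : ¬ IsDecTab (T.set c ((col T c).set r x))) :
    (0 < r ∧ entry T c (r - 1) ≤ x) ∨ (0 < c ∧ entry T (c - 1) r ≤ x) := by
  by_contra! h
  refine hfail (isDecTab_set_entry hT hr hx ?_ ?_)
  · rcases Nat.eq_zero_or_pos r with h0 | h0
    exacts [Or.inl h0, Or.inr (h.1 h0)]
  · rcases Nat.eq_zero_or_pos c with h0 | h0
    exacts [Or.inl h0, Or.inr (h.2 h0)]

/-! ## One step of Hecke insertion -/

-- `bumpOut`, `bumpCol` and `bumpTab` are the `y`, `C'` and `T'` of the bumping branch of `heckeGo`.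
def bumpOut (T : List (List ℕ)) (c x : ℕ) : ℕ :=
  ((col T c).filter (fun z => decide (z < x))).foldr max 0

def bumpCol (T : List (List ℕ)) (c x : ℕ) : List ℕ :=
  (col T c).map (fun z => if z = bumpOut T c x then x else z)

def bumpTab (T : List (List ℕ)) (c x : ℕ) : List (List ℕ) :=
  if IsDecTab (T.set c (bumpCol T c x)) then T.set c (bumpCol T c x) else T

section Step

variable {f : ℕ} {T : List (List ℕ)} {c x : ℕ}

theorem heckeGo_succ_of_append (hstop : ∀ z ∈ col T c, x ≤ z)
    (happ : IsDecTab (setCol T c (col T c ++ [x]))) :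
    heckeGo (f + 1) T c x = (setCol T c (col T c ++ [x]), c, true) := by
  simp only [heckeGo]
  exact (if_pos hstop).trans (if_pos happ)

theorem heckeGo_succ_of_not_append (hstop : ∀ z ∈ col T c, x ≤ z)
    (happ : ¬ IsDecTab (setCol T c (col T c ++ [x]))) :
    heckeGo (f + 1) T c x = (T, rowEnd T (colLen T c - 1), false) := by
  simp only [heckeGo]
  exact (if_pos hstop).trans (if_neg happ)

theorem heckeGo_succ_of_bump (hbump : ∃ z ∈ col T c, z < x) :
    heckeGo (f + 1) T c x = heckeGo f (bumpTab T c x) (c + 1) (bumpOut T c x) := by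
  obtain ⟨z, hz, hzx⟩ := hbump
  simp only [heckeGo]
  exact if_neg fun h => (h z hz).not_gt hzx

theorem bumpOut_mem_filter (hbump : ∃ z ∈ col T c, z < x) :
    bumpOut T c x ∈ (col T c).filter (fun z => decide (z < x)) := by
  obtain ⟨z, hz, hzx⟩ := hbump
  have hne : (col T c).filter (fun z => decide (z < x)) ≠ [] :=
    List.ne_nil_of_mem (List.mem_filter.2 ⟨hz, decide_eq_true hzx⟩)
  exact List.maximum_mem (List.foldr_max_of_ne_nil hne).symm

theorem bumpOut_mem (hbump : ∃ z ∈ col T c, z < x) : bumpOut T c x ∈ col T c :=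
  (List.mem_filter.1 (bumpOut_mem_filter hbump)).1

theorem bumpOut_lt (hbump : ∃ z ∈ col T c, z < x) : bumpOut T c x < x :=
  of_decide_eq_true (List.mem_filter.1 (bumpOut_mem_filter hbump)).2

theorem le_bumpOut {z : ℕ} (hz : z ∈ col T c) (hzx : z < x) : z ≤ bumpOut T c x :=
  List.le_max_of_le (List.mem_filter.2 ⟨hz, decide_eq_true hzx⟩) le_rfl

theorem bumpOut_le {w : ℕ} (h : ∀ z ∈ col T c, z < x → z ≤ w) : bumpOut T c x ≤ w :=
  List.max_le_of_forall_le _ _ fun z hz =>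
    h z (List.mem_filter.1 hz).1 (of_decide_eq_true (List.mem_filter.1 hz).2)

theorem length_bumpTab : (bumpTab T c x).length = T.length := by
  unfold bumpTab; split_ifs <;> simp

theorem isDecTab_bumpTab (hT : IsDecTab T) : IsDecTab (bumpTab T c x) := by
  unfold bumpTab; split_ifs with h; exacts [h, hT]

theorem col_bumpTab_of_ne {j : ℕ} (hj : j ≠ c) : col (bumpTab T c x) j = col T j := by
  unfold bumpTab; split_ifs <;> simp [col_set, hj]

theorem colLen_bumpTab (j : ℕ) : colLen (bumpTab T c x) j = colLen T j := by
  unfold bumpTab colLen; split_ifs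
  · rw [col_set]; split_ifs with h
    · rw [h.1, bumpCol, List.length_map]
    · rfl
  · rfl

theorem mem_col_bumpTab {z : ℕ} (hz : z ∈ col (bumpTab T c x) c) : z ∈ col T c ∨ z = x := by
  unfold bumpTab at hz; split_ifs at hz
  · rw [col_set] at hz; split_ifs at hz
    · obtain ⟨w, hw, rfl⟩ := List.mem_map.1 hz
      split_ifs
      exacts [Or.inr rfl, Or.inl hw]
    · exact Or.inl hz
  · exact Or.inl hz

theorem bumpTab_eq_ite (hT : IsDecTab T) {r : ℕ} (hr : r < colLen T c)
    (hy : entry T c r = bumpOut T c x) :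
    bumpTab T c x =
      if IsDecTab (T.set c ((col T c).set r x)) then T.set c ((col T c).set r x) else T := by
  have hcol : bumpCol T c x = (col T c).set r x := by
    rw [bumpCol, ← hy, entry, List.getD_eq_getElem _ _ hr]
    exact List.map_ite_eq_set (hT.nodup_col c) hr x
  rw [bumpTab, hcol]

theorem bumpOut_lt_entry_bumpTab_zero (hT : IsDecTab T) (hbump : ∃ z ∈ col T c, z < x)
    (htop : c = 0 ∨ x < entry T (c - 1) 0) : bumpOut T c x < entry (bumpTab T c x) c 0 := by
  obtain ⟨r, hr, hy⟩ := mem_col_iff.1 (bumpOut_mem hbump)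
  rw [bumpTab_eq_ite hT hr hy]
  rcases Nat.eq_zero_or_pos r with rfl | hr0
  · have hx := bumpOut_lt hbump
    rw [if_pos (isDecTab_set_entry hT hr (hy ▸ hx) (Or.inl rfl) htop), entry_set_set hr,
      if_pos ⟨rfl, rfl⟩]
    exact hx
  · have hlt : bumpOut T c x < entry T c 0 := hy ▸ hT.entry_lt_entry hr0 hr
    split_ifs
    · rwa [entry_set_set hr, if_neg (by omega)]
    · exact hlt

end Step

section Comparison

variable {A B : List (List ℕ)} {c v u : ℕ}

theorem IsDecTab.exists_mem_col_lt_of_not_append (hA : IsDecTab A)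
    (hfail : ¬ IsDecTab (setCol A c (col A c ++ [v]))) (hu : c = 0 ∨ u ∈ col A (c - 1))
    (hvu : v < u) : ∃ z ∈ col A c, z < u := by
  rcases hA.append_blocked hfail with ⟨hpos, hbot⟩ | ⟨hc, hleft⟩
  · exact ⟨entry A c (colLen A c - 1), entry_mem_col (by omega), by omega⟩
  · obtain ⟨ru, hru, rfl⟩ := mem_col_iff.1 (hu.resolve_left hc.ne')
    have hru' : ru < colLen A c := by
      by_contra! h
      rcases hleft with hleft | hleft
      · omega
      · have := hA.entry_le_entry h hru
        omega
    exact ⟨_, entry_mem_col hru', hA.entry_lt_entry_pred hc hru'⟩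

/-- Whether or not `v` replaced the bumped entry `y`, column `c` now holds an entry in `(y, u)`:
`v` itself, the entry just above `y`, or else the entry of column `c` in the row of `u`, which is
above `y` because the entry left of `y` is at most `v`. -/
theorem IsDecTab.exists_mem_col_bumpTab_between (hA : IsDecTab A)
    (hbump : ∃ z ∈ col A c, z < v) (hu : c = 0 ∨ u ∈ col A (c - 1)) (hvu : v < u) :
    ∃ z ∈ col (bumpTab A c v) c, bumpOut A c v < z ∧ z < u := by
  obtain ⟨r, hr, hy⟩ := mem_col_iff.1 (bumpOut_mem hbump)
  have hyv := bumpOut_lt hbump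
  rw [bumpTab_eq_ite hA hr hy]
  split_ifs with hok
  · refine ⟨v, mem_col_iff.2 ⟨r, (colLen_set_set A c r v c).symm ▸ hr, ?_⟩, hyv, hvu⟩
    rw [entry_set_set hr, if_pos ⟨rfl, rfl⟩]
  · rcases hA.replace_blocked hr (hy ▸ hyv) hok with ⟨hr0, habove⟩ | ⟨hc, hleft⟩
    · exact ⟨entry A c (r - 1), entry_mem_col (by omega), hy ▸ hA.entry_lt_entry (by omega) hr,
        by omega⟩
    · obtain ⟨ru, hru, rfl⟩ := mem_col_iff.1 (hu.resolve_left hc.ne')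
      have hrur : ru < r := by
        by_contra! h
        have := hA.entry_le_entry h hru
        omega
      exact ⟨entry A c ru, entry_mem_col (by omega), hy ▸ hA.entry_lt_entry hrur hr,
        hA.entry_lt_entry_pred hc (by omega)⟩

theorem bumpOut_le_bumpOut (huv : u ≤ v) (hcol : col B c = col (bumpTab A c v) c) :
    bumpOut B c u ≤ bumpOut A c v := by
  refine bumpOut_le fun z hz hzu => ?_
  rcases mem_col_bumpTab (hcol ▸ hz) with hz | rfl
  exacts [le_bumpOut hz (by omega), absurd huv (not_le.2 hzu)]

end Comparison

/-! ## Single insertions -/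

theorem isDecTab_heckeGo {T : List (List ℕ)} (hT : IsDecTab T) (f c x : ℕ) :
    IsDecTab (heckeGo f T c x).1 := by
  induction f generalizing T c x with
  | zero => exact hT
  | succ f ih =>
    by_cases hstop : ∀ z ∈ col T c, x ≤ z
    · by_cases happ : IsDecTab (setCol T c (col T c ++ [x]))
      · rwa [heckeGo_succ_of_append hstop happ]
      · rwa [heckeGo_succ_of_not_append hstop happ]
    · have hbump : ∃ z ∈ col T c, z < x := by simpa using hstop
      rw [heckeGo_succ_of_bump hbump]
      exact ih (isDecTab_bumpTab hT) _ _

theorem col_heckeGo_of_lt {T : List (List ℕ)} {c j : ℕ} (hc : c ≤ T.length) (hj : j < c)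
    (f x : ℕ) : col (heckeGo f T c x).1 j = col T j := by
  induction f generalizing T c x with
  | zero => rfl
  | succ f ih =>
    by_cases hstop : ∀ z ∈ col T c, x ≤ z
    · by_cases happ : IsDecTab (setCol T c (col T c ++ [x]))
      · rw [heckeGo_succ_of_append hstop happ, col_setCol hc, if_neg hj.ne]
      · rw [heckeGo_succ_of_not_append hstop happ]
    · have hbump : ∃ z ∈ col T c, z < x := by simpa using hstop
      have hc' := lt_length_of_colLen_pos (List.length_pos_of_mem (bumpOut_mem hbump))
      rw [heckeGo_succ_of_bump hbump, ih (by rw [length_bumpTab]; omega) (by omega),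
        col_bumpTab_of_ne hj.ne]

theorem heckeGo_end_le_max_of_stop {f : ℕ} {T : List (List ℕ)} {c x : ℕ}
    (hstop : ∀ z ∈ col T c, x ≤ z) :
    (heckeGo (f + 1) T c x).2.1 ≤ max c (rowEnd T (colLen T c - 1)) := by
  by_cases happ : IsDecTab (setCol T c (col T c ++ [x]))
  · rw [heckeGo_succ_of_append hstop happ]; exact le_max_left _ _
  · rw [heckeGo_succ_of_not_append hstop happ]; exact le_max_right _ _

/-- The state of `heckeGo f T c x` during an insertion: the fuel suffices to reach a new column,
and the value `x` carried into column `c` was bumped out of column `c - 1`, hence is below its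
top entry. -/
structure HeckeGoInv (f : ℕ) (T : List (List ℕ)) (c x : ℕ) : Prop where
  isDecTab : IsDecTab T
  le_length : c ≤ T.length
  length_lt : T.length < f + c
  lt_entry : c = 0 ∨ x < entry T (c - 1) 0

namespace HeckeGoInv

variable {f : ℕ} {T : List (List ℕ)} {c x : ℕ}

theorem fuel_pos (h : HeckeGoInv f T c x) : 0 < f := by
  have := h.le_length; have := h.length_lt; omega

theorem bump (h : HeckeGoInv (f + 1) T c x) (hbump : ∃ z ∈ col T c, z < x) :
    HeckeGoInv f (bumpTab T c x) (c + 1) (bumpOut T c x) where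
  isDecTab := isDecTab_bumpTab h.isDecTab
  le_length := by
    have := lt_length_of_colLen_pos (List.length_pos_of_mem (bumpOut_mem hbump))
    rw [length_bumpTab]; omega
  length_lt := by rw [length_bumpTab]; have := h.length_lt; omega
  lt_entry := Or.inr (bumpOut_lt_entry_bumpTab_zero h.isDecTab hbump h.lt_entry)

theorem colLen_pos_of_not_append (h : HeckeGoInv f T c x)
    (hfail : ¬ IsDecTab (setCol T c (col T c ++ [x]))) : 0 < colLen T c := by
  by_contra! h0
  rcases h.isDecTab.append_blocked hfail with ⟨hpos, -⟩ | ⟨hc, hleft⟩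
  · omega
  · have htop := h.lt_entry.resolve_left hc.ne'
    rw [Nat.le_zero.1 h0] at hleft
    rcases hleft with hleft | hleft
    · rw [entry_of_colLen_le hleft] at htop; omega
    · omega

theorem le_heckeGo_end (h : HeckeGoInv f T c x) : c ≤ (heckeGo f T c x).2.1 := by
  induction f generalizing T c x with
  | zero => exact absurd h.fuel_pos (lt_irrefl 0)
  | succ f ih =>
    by_cases hstop : ∀ z ∈ col T c, x ≤ z
    · by_cases happ : IsDecTab (setCol T c (col T c ++ [x]))
      · rw [heckeGo_succ_of_append hstop happ]
      · rw [heckeGo_succ_of_not_append hstop happ]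
        exact h.isDecTab.le_rowEnd (by have := h.colLen_pos_of_not_append happ; omega)
    · have hbump : ∃ z ∈ col T c, z < x := by simpa using hstop
      rw [heckeGo_succ_of_bump hbump]
      exact (ih (h.bump hbump)).trans' (Nat.le_succ c)

theorem lt_heckeGo_end (h : HeckeGoInv f T c x) (hbump : ∃ z ∈ col T c, z < x) :
    c < (heckeGo f T c x).2.1 := by
  obtain ⟨f, rfl⟩ := Nat.exists_eq_add_one.2 h.fuel_pos
  rw [heckeGo_succ_of_bump hbump]
  exact (h.bump hbump).le_heckeGo_end

theorem rowLen_le_heckeGo_end (h : HeckeGoInv f T c x) {r : ℕ} (hr : r < colLen T c)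
    (hx : entry T c r < x) : rowLen T r ≤ (heckeGo f T c x).2.1 := by
  induction f generalizing T c x with
  | zero => exact absurd h.fuel_pos (lt_irrefl 0)
  | succ f ih =>
    have hT := h.isDecTab
    have hbump : ∃ z ∈ col T c, z < x := ⟨_, entry_mem_col hr, hx⟩
    have hy : entry T c r ≤ bumpOut T c x := le_bumpOut (entry_mem_col hr) hx
    rw [heckeGo_succ_of_bump hbump]
    by_cases hr' : r < colLen T (c + 1)
    · have hrow : rowLen (bumpTab T c x) r = rowLen T r :=
        rowLen_eq_of_colLen_eq hT.colLen_antitone (isDecTab_bumpTab hT).colLen_antitone hr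
          fun j _ => colLen_bumpTab j
      have hent : entry (bumpTab T c x) (c + 1) r = entry T (c + 1) r := by
        rw [entry, col_bumpTab_of_ne (by omega), entry]
      rw [← hrow]
      exact ih (h.bump hbump) (by rwa [colLen_bumpTab])
        (by rw [hent]; exact (hT.entry_col_succ_lt hr').trans_le hy)
    · have := (rowLen_le_iff hT.colLen_antitone).2 (not_lt.1 hr')
      exact this.trans (h.bump hbump).le_heckeGo_end

theorem rowEnd_lt_heckeGo_end (h : HeckeGoInv f T c x) (hbump : ∃ z ∈ col T c, z < x) :
    rowEnd T (colLen T c - 1) < (heckeGo f T c x).2.1 := by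
  obtain ⟨z, hz, hzx⟩ := hbump
  have hpos : 0 < colLen T c := List.length_pos_of_mem hz
  have hle := h.rowLen_le_heckeGo_end (r := colLen T c - 1) (by omega)
    ((h.isDecTab.entry_bottom_le hz).trans_lt hzx)
  have := (lt_rowLen_iff h.isDecTab.colLen_antitone).2 (by omega : colLen T c - 1 < colLen T c)
  rw [rowEnd_eq_rowLen_sub_one]
  omega

theorem colLen_heckeGo_end_succ_lt (h : HeckeGoInv f T c x) (hc : 0 < c) :
    colLen (heckeGo f T c x).1 ((heckeGo f T c x).2.1 + 1) < colLen T (c - 1) := by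
  induction f generalizing T c x with
  | zero => exact absurd h.fuel_pos (lt_irrefl 0)
  | succ f ih =>
    have hT := h.isDecTab
    have hcc : colLen T c ≤ colLen T (c - 1) := hT.colLen_antitone (Nat.sub_le c 1)
    by_cases hstop : ∀ z ∈ col T c, x ≤ z
    · by_cases happ : IsDecTab (setCol T c (col T c ++ [x]))
      · have hlen := happ.colLen_antitone (Nat.sub_le c 1)
        rw [heckeGo_succ_of_append hstop happ]
        simp only [colLen_setCol_append h.le_length, if_pos, if_neg (show c + 1 ≠ c by omega),
          if_neg (show c - 1 ≠ c by omega)] at hlen ⊢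
        have := hT.colLen_succ_le c
        omega
      · have hpos := h.colLen_pos_of_not_append happ
        rw [heckeGo_succ_of_not_append hstop happ]
        have hc' : c < rowLen T (colLen T c - 1) :=
          (lt_rowLen_iff hT.colLen_antitone).2 (by omega)
        have hk := (rowLen_le_iff hT.colLen_antitone).1 (le_refl (rowLen T (colLen T c - 1)))
        dsimp only
        rw [rowEnd_eq_rowLen_sub_one, Nat.sub_add_cancel (by omega)]
        omega
    · have hbump : ∃ z ∈ col T c, z < x := by simpa using hstop
      rw [heckeGo_succ_of_bump hbump]
      have := ih (h.bump hbump) (Nat.succ_pos c)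
      rw [Nat.add_sub_cancel, colLen_bumpTab] at this
      exact this.trans_le hcc

end HeckeGoInv

/-! ## Two consecutive insertions -/

section TwoInsertions

variable {f g : ℕ} {A B : List (List ℕ)} {c v u : ℕ}

theorem HeckeGoInv.heckeGo_end_lt_heckeGo_end_of_stop (hA : HeckeGoInv (f + 1) A c v)
    (hB : HeckeGoInv g B c u) (hstop : ∀ z ∈ col A c, v ≤ z)
    (hcol : ∀ j, c ≤ j → col B j = col (heckeGo (f + 1) A c v).1 j)
    (hu : c = 0 ∨ u ∈ col A (c - 1)) (hvu : v < u) :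
    (heckeGo (f + 1) A c v).2.1 < (heckeGo g B c u).2.1 := by
  by_cases happ : IsDecTab (setCol A c (col A c ++ [v]))
  · rw [heckeGo_succ_of_append hstop happ] at hcol ⊢
    refine hB.lt_heckeGo_end ⟨v, ?_, hvu⟩
    rw [hcol c le_rfl, col_setCol hA.le_length, if_pos rfl]
    exact List.mem_append_right _ (List.mem_singleton_self v)
  · rw [heckeGo_succ_of_not_append hstop happ] at hcol ⊢
    obtain ⟨z, hz, hzu⟩ := hA.isDecTab.exists_mem_col_lt_of_not_append happ hu hvu
    have := hB.rowEnd_lt_heckeGo_end ⟨z, hcol c le_rfl ▸ hz, hzu⟩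
    rwa [rowEnd_eq_of_col_eq hA.isDecTab hB.isDecTab hcol (hA.colLen_pos_of_not_append happ)]
      at this

theorem HeckeGoInv.heckeGo_end_le_heckeGo_end_of_stop (hA : HeckeGoInv (f + 1) A c v)
    (hB : IsDecTab B) (hstop : ∀ z ∈ col A c, v ≤ z)
    (hcol : ∀ j, c ≤ j → col B j = col (heckeGo (f + 1) A c v).1 j) (huv : u ≤ v) :
    (heckeGo (g + 1) B c u).2.1 ≤ (heckeGo (f + 1) A c v).2.1 := by
  by_cases happ : IsDecTab (setCol A c (col A c ++ [v]))
  · rw [heckeGo_succ_of_append hstop happ] at hcol ⊢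
    dsimp only at hcol ⊢
    have hBc : col B c = col A c ++ [v] := by
      rw [hcol c le_rfl, col_setCol hA.le_length, if_pos rfl]
    have hstopB : ∀ z ∈ col B c, u ≤ z := by
      intro z hz
      rcases List.mem_append.1 (hBc ▸ hz) with hz | hz
      exacts [huv.trans (hstop z hz), List.mem_singleton.1 hz ▸ huv]
    have hnext : colLen B (c + 1) = colLen A (c + 1) := by
      rw [colLen, hcol (c + 1) (by omega), col_setCol hA.le_length, if_neg (by omega), colLen]
    have hlen : colLen B c = colLen A c + 1 := by
      rw [colLen, hBc, List.length_append, List.length_singleton, colLen]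
    refine (heckeGo_end_le_max_of_stop hstopB).trans (max_le le_rfl (hB.rowEnd_le ?_))
    have := hA.isDecTab.colLen_succ_le c
    omega
  · rw [heckeGo_succ_of_not_append hstop happ] at hcol ⊢
    have hstopB : ∀ z ∈ col B c, u ≤ z := fun z hz =>
      huv.trans (hstop z (hcol c le_rfl ▸ hz))
    have hpos := hA.colLen_pos_of_not_append happ
    exact (heckeGo_end_le_max_of_stop hstopB).trans (max_le (hA.isDecTab.le_rowEnd (by omega))
      (rowEnd_eq_of_col_eq hA.isDecTab hB hcol hpos).le)

theorem HeckeGoInv.heckeGo_end_lt_heckeGo_end (hA : HeckeGoInv f A c v)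
    (hB : HeckeGoInv g B c u) (hcol : ∀ j, c ≤ j → col B j = col (heckeGo f A c v).1 j)
    (hu : c = 0 ∨ u ∈ col A (c - 1)) (hvu : v < u) :
    (heckeGo f A c v).2.1 < (heckeGo g B c u).2.1 := by
  induction f generalizing g A B c v u with
  | zero => exact absurd hA.fuel_pos (lt_irrefl 0)
  | succ f ih =>
    by_cases hstop : ∀ z ∈ col A c, v ≤ z
    · exact hA.heckeGo_end_lt_heckeGo_end_of_stop hB hstop hcol hu hvu
    have hbump : ∃ z ∈ col A c, z < v := by simpa using hstop
    rw [heckeGo_succ_of_bump hbump] at hcol ⊢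
    have hBc : col B c = col (bumpTab A c v) c :=
      (hcol c le_rfl).trans (col_heckeGo_of_lt (hA.bump hbump).le_length (by omega) _ _)
    obtain ⟨z, hz, hyz, hzu⟩ := hA.isDecTab.exists_mem_col_bumpTab_between hbump hu hvu
    have hbumpB : ∃ z ∈ col B c, z < u := ⟨z, hBc ▸ hz, hzu⟩
    obtain ⟨g, rfl⟩ := Nat.exists_eq_add_one.2 hB.fuel_pos
    rw [heckeGo_succ_of_bump hbumpB]
    refine ih (hA.bump hbump) (hB.bump hbumpB) (fun j hj => ?_) (Or.inr ?_)
      (hyz.trans_le (le_bumpOut (hBc ▸ hz) hzu))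
    · rw [col_bumpTab_of_ne (by omega)]; exact hcol j (by omega)
    · rw [Nat.add_sub_cancel, ← hBc]; exact bumpOut_mem hbumpB

theorem HeckeGoInv.heckeGo_end_le_heckeGo_end (hA : HeckeGoInv f A c v)
    (hB : HeckeGoInv g B c u) (hcol : ∀ j, c ≤ j → col B j = col (heckeGo f A c v).1 j)
    (huv : u ≤ v) : (heckeGo g B c u).2.1 ≤ (heckeGo f A c v).2.1 := by
  induction f generalizing g A B c v u with
  | zero => exact absurd hA.fuel_pos (lt_irrefl 0)
  | succ f ih =>
    obtain ⟨g, rfl⟩ := Nat.exists_eq_add_one.2 hB.fuel_pos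
    by_cases hstop : ∀ z ∈ col A c, v ≤ z
    · exact hA.heckeGo_end_le_heckeGo_end_of_stop hB.isDecTab hstop hcol huv
    have hbump : ∃ z ∈ col A c, z < v := by simpa using hstop
    rw [heckeGo_succ_of_bump hbump] at hcol ⊢
    have hBc : col B c = col (bumpTab A c v) c :=
      (hcol c le_rfl).trans (col_heckeGo_of_lt (hA.bump hbump).le_length (by omega) _ _)
    by_cases hstopB : ∀ z ∈ col B c, u ≤ z
    · have hend := (hA.bump hbump).le_heckeGo_end
      have hnext := (hA.bump hbump).colLen_heckeGo_end_succ_lt (Nat.succ_pos c)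
      rw [Nat.add_sub_cancel, colLen_bumpTab] at hnext
      set R := heckeGo f (bumpTab A c v) (c + 1) (bumpOut A c v)
      have hBR : colLen B (R.2.1 + 1) = colLen R.1 (R.2.1 + 1) :=
        congrArg List.length (hcol _ (by omega))
      have hlen : colLen B c = colLen A c := (congrArg List.length hBc).trans (colLen_bumpTab c)
      exact (heckeGo_end_le_max_of_stop hstopB).trans
        (max_le (by omega) (hB.isDecTab.rowEnd_le (by omega)))
    have hbumpB : ∃ z ∈ col B c, z < u := by simpa using hstopB
    rw [heckeGo_succ_of_bump hbumpB]
    refine ih (hA.bump hbump) (hB.bump hbumpB) (fun j hj => ?_) (bumpOut_le_bumpOut huv hBc)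
    rw [col_bumpTab_of_ne (by omega)]; exact hcol j (by omega)

end TwoInsertions

/-- **Pieri property of Hecke insertion.**  If `x₁` is Hecke-inserted into a
decreasing tableau `T` ending at box `c₁`, and then `x₂` is Hecke-inserted into the
result ending at box `c₂`, then `c₂` is strictly to the right of `c₁` if and only
if `x₁ < x₂`. -/
theorem stmt16 (T : List (List ℕ)) (hT : IsDecTab T) (x₁ x₂ : ℕ) :
    (heckeInsert T x₁).2.1 < (heckeInsert (heckeInsert T x₁).1 x₂).2.1 ↔ x₁ < x₂ := by
  have hA : HeckeGoInv (T.length + 2) T 0 x₁ := ⟨hT, Nat.zero_le _, by omega, Or.inl rfl⟩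
  have hB : HeckeGoInv ((heckeInsert T x₁).1.length + 2) (heckeInsert T x₁).1 0 x₂ :=
    ⟨isDecTab_heckeGo hT _ _ _, Nat.zero_le _, by omega, Or.inl rfl⟩
  refine ⟨fun h => lt_of_not_ge fun hle => h.not_ge ?_, fun h => ?_⟩
  · exact hA.heckeGo_end_le_heckeGo_end hB (fun _ _ => rfl) hle
  · exact hA.heckeGo_end_lt_heckeGo_end hB (fun _ _ => rfl) (Or.inl rfl) h

end
end
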